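/- arXiv:1908.11556 — 3 statements merged into one kernel-verified Lean document; each statement's English description precedes it below -/
import Mathlib

section
/- Let U be a two-dimensional update family with stable set S(U) = S¹. Then there exists ρ̂ > 0 such that for every initial set A ⊆ ℤ² and every x ∈ ⟨A⟩_U, one has A ∩ B_ρ̂(x) ≠ ∅, where B_ρ̂(x) = {y ∈ ℤ² : ‖x−y‖ ≤ ρ̂} is the discrete Euclidean ball of radius ρ̂ centred at x. -/
open scoped Classical

/-- Vertices of the two-dimensional lattice. -/
abbrev V2 : Type := ℤ × ℤ

/-- One step of `U`-bootstrap percolation on `ℤ²`: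
`x` gets infected if `x + X ⊆ S` for some update rule `X ∈ U`. -/
def ustep (U : Finset (Finset V2)) (S : Set V2) : Set V2 :=
  S ∪ {x | ∃ X ∈ U, ∀ y ∈ X, x + y ∈ S}

/-- The closure `⟨A⟩_U` under `U`-bootstrap percolation on `ℤ²`. -/
def uclosure (U : Finset (Finset V2)) (A : Set V2) : Set V2 :=
  ⋃ n, (ustep U)^[n] A

/-- The stable set of `U` is all of `S¹`: for every unit vector `u`, no update rule is
contained in the open half-plane `{x : ⟨x,u⟩ < 0}`. -/
def StableAll (U : Finset (Finset V2)) : Prop :=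
  ∀ u : ℝ × ℝ, u.1 ^ 2 + u.2 ^ 2 = 1 →
    ∀ X ∈ U, ∃ x ∈ X, 0 ≤ (x.1 : ℝ) * u.1 + (x.2 : ℝ) * u.2

/-- Euclidean distance between two points of `ℤ²`. -/
noncomputable def edist2 (x y : V2) : ℝ :=
  Real.sqrt (((x.1 - y.1 : ℤ) : ℝ) ^ 2 + ((x.2 - y.2 : ℤ) : ℝ) ^ 2)

/-- `ρ` is a dilation radius for `U`: every eventually infected site is within
Euclidean distance `ρ` of an initially infected site. -/
def DilationProp (U : Finset (Finset V2)) (ρ : ℝ) : Prop :=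
  ∀ A : Set V2, ∀ x ∈ uclosure U A, ∃ y ∈ A, edist2 x y ≤ ρ

/-- Nearest-neighbour adjacency on `ℤ²`. -/
def latAdj (u v : V2) : Prop := (u.1 - v.1).natAbs + (u.2 - v.2).natAbs = 1

/-- `S` is connected in the nearest-neighbour lattice graph on `ℤ²`:
any two of its points are joined by a lattice path staying in `S`. -/
def ConnIn (S : Set V2) : Prop :=
  ∀ x ∈ S, ∀ y ∈ S, Relation.ReflTransGen (fun u v => u ∈ S ∧ v ∈ S ∧ latAdj u v) x y

/-- The cluster `K = K(U,A)`: the connected component of the origin in the subgraph of the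
nearest-neighbour lattice induced by `⟨A⟩_U` (empty if the origin is not infected). -/
def cluster (U : Finset (Finset V2)) (A : Set V2) : Set V2 :=
  {x | ((0, 0) : V2) ∈ uclosure U A ∧ x ∈ uclosure U A ∧
    Relation.ReflTransGen
      (fun u v => u ∈ uclosure U A ∧ v ∈ uclosure U A ∧ latAdj u v) ((0, 0) : V2) x}


set_option maxHeartbeats 1000000

namespace BP
def dot (a b : V2) : ℤ := a.1 * b.1 + a.2 * b.2
def det2 (a b : V2) : ℤ := a.1 * b.2 - a.2 * b.1

lemma decomp_dot (p q n c : V2) (h : det2 p q = 1) :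
    dot n c = det2 n q * dot p c + det2 p n * dot q c := by
  simp [dot, det2] at h ⊢; linear_combination (-(n.1 * c.1 + n.2 * c.2)) * h

lemma decomp_det (p q n c : V2) (h : det2 p q = 1) :
    det2 c n = det2 n q * det2 c p + det2 p n * det2 c q := by
  simp [det2] at h ⊢; linear_combination (-(c.1 * n.2 - c.2 * n.1)) * h

lemma dot_add_left (a b c : V2) : dot (a + b) c = dot a c + dot b c := by
  simp [dot, Prod.fst_add, Prod.snd_add]; ring

lemma lagrange (a b : V2) : dot a b ^ 2 + det2 a b ^ 2 = dot a a * dot b b := by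
  simp [dot, det2]; ring

lemma tri_id (c y n : V2) :
    dot y n * dot c c = dot y c * dot n c + det2 c y * det2 c n := by
  simp [dot, det2]; ring

lemma cramer1 (p q y : V2) (h : det2 p q = 1) :
    y.1 = det2 y q * p.1 + det2 p y * q.1 := by
  simp [det2] at h ⊢; linear_combination (-y.1) * h

lemma cramer2 (p q y : V2) (h : det2 p q = 1) :
    y.2 = det2 y q * p.2 + det2 p y * q.2 := by
  simp [det2] at h ⊢; linear_combination (-y.2) * h

lemma sq_pos_of_ne {a : V2} (h : a ≠ 0) : 1 ≤ dot a a := by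
  have h1 : a.1 ≠ 0 ∨ a.2 ≠ 0 := by
    by_contra hc; push_neg at hc; exact h (Prod.ext hc.1 hc.2)
  rcases h1 with h1 | h1
  · have := Int.one_le_abs (by exact h1)
    have : 1 ≤ a.1 ^ 2 := by nlinarith [sq_abs a.1]
    simp [dot]; nlinarith [sq_nonneg a.2]
  · have := Int.one_le_abs (by exact h1)
    have : 1 ≤ a.2 ^ 2 := by nlinarith [sq_abs a.2]
    simp [dot]; nlinarith [sq_nonneg a.1]

lemma ne_zero_of_det_left {a b : V2} (h : det2 a b = 1) : a ≠ 0 := by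
  rintro rfl; simp [det2] at h

lemma ne_zero_of_det_right {a b : V2} (h : det2 a b = 1) : b ≠ 0 := by
  rintro rfl; simp [det2] at h

def subdiv : ℕ → V2 → V2 → List (V2 × V2)
  | 0, p, q => [(p, q)]
  | d+1, p, q => subdiv d p (p+q) ++ subdiv d (p+q) q

lemma det2_med_left (a b : V2) : det2 a (a + b) = det2 a b := by simp [det2]; ring
lemma det2_med_right (a b : V2) : det2 (a + b) b = det2 a b := by simp [det2]; ring

lemma sub_inv {d : ℕ} {a b : V2} (h : det2 a b = 1) :
    ∀ pq ∈ subdiv d a b, det2 pq.1 pq.2 = 1 ∧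
      0 ≤ det2 a pq.1 ∧ 0 ≤ det2 pq.1 b ∧ 0 ≤ det2 a pq.2 ∧ 0 ≤ det2 pq.2 b := by
  induction d generalizing a b with
  | zero =>
    intro pq hpq
    simp [subdiv] at hpq; subst hpq
    have haa : det2 a a = 0 := by simp [det2, mul_comm]
    have hbb : det2 b b = 0 := by simp [det2, mul_comm]
    exact ⟨h, by show (0:ℤ) ≤ det2 a a; omega, by show (0:ℤ) ≤ det2 a b; omega,
      by show (0:ℤ) ≤ det2 a b; omega, by show (0:ℤ) ≤ det2 b b; omega⟩
  | succ d ih =>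
    intro pq hpq
    simp only [subdiv, List.mem_append] at hpq
    rcases hpq with hpq | hpq
    · have hL : det2 a (a + b) = 1 := by rw [det2_med_left]; exact h
      obtain ⟨h1, h2, h3, h4, h5⟩ := ih hL pq hpq
      refine ⟨h1, h2, ?_, h4, ?_⟩
      · have : det2 pq.1 b = det2 pq.1 (a+b) + det2 a pq.1 := by simp [det2]; ring
        omega
      · have : det2 pq.2 b = det2 pq.2 (a+b) + det2 a pq.2 := by simp [det2]; ring
        omega
    · have hR : det2 (a + b) b = 1 := by rw [det2_med_right]; exact h
      obtain ⟨h1, h2, h3, h4, h5⟩ := ih hR pq hpq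
      refine ⟨h1, ?_, h3, ?_, h5⟩
      · have : det2 a pq.1 = det2 (a+b) pq.1 + det2 pq.1 b := by simp [det2]; ring
        omega
      · have : det2 a pq.2 = det2 (a+b) pq.2 + det2 pq.2 b := by simp [det2]; ring
        omega

lemma sub_dot {d : ℕ} {a b : V2} (h : det2 a b = 1) (hd : 0 ≤ dot a b) :
    ∀ pq ∈ subdiv d a b, 0 ≤ dot pq.1 pq.2 := by
  induction d generalizing a b with
  | zero => intro pq hpq; simp [subdiv] at hpq; subst hpq; exact hd
  | succ d ih =>
    intro pq hpq
    simp only [subdiv, List.mem_append] at hpq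
    have ha := sq_pos_of_ne (ne_zero_of_det_left h)
    have hb := sq_pos_of_ne (ne_zero_of_det_right h)
    rcases hpq with hpq | hpq
    · refine ih (by rw [det2_med_left]; exact h) ?_ pq hpq
      have : dot a (a + b) = dot a a + dot a b := by simp [dot]; ring
      omega
    · refine ih (by rw [det2_med_right]; exact h) ?_ pq hpq
      have : dot (a + b) b = dot a b + dot b b := by simp [dot]; ring
      omega

lemma sub_norm {d : ℕ} {a b : V2} (h : det2 a b = 1) (hd : 0 ≤ dot a b) :
    ∀ pq ∈ subdiv d a b,
      (d : ℤ) + max (dot a a) (dot b b) ≤ max (dot pq.1 pq.1) (dot pq.2 pq.2) := by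
  induction d generalizing a b with
  | zero => intro pq hpq; simp [subdiv] at hpq; subst hpq; simp
  | succ d ih =>
    intro pq hpq
    simp only [subdiv, List.mem_append] at hpq
    have ha := sq_pos_of_ne (ne_zero_of_det_left h)
    have hb := sq_pos_of_ne (ne_zero_of_det_right h)
    have hm : dot (a+b) (a+b) = dot a a + 2 * dot a b + dot b b := by simp [dot]; ring
    rcases hpq with hpq | hpq
    · have := ih (a := a) (b := a + b) (by rw [det2_med_left]; exact h)
        (by have : dot a (a + b) = dot a a + dot a b := by simp [dot]; ring
            omega) pq hpq
      have hmax : max (dot a a) (dot b b) + 1 ≤ max (dot a a) (dot (a+b) (a+b)) := by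
        have : max (dot a a) (dot b b) + 1 ≤ dot (a+b) (a+b) := by omega
        omega
      push_cast
      omega
    · have := ih (a := a + b) (b := b) (by rw [det2_med_right]; exact h)
        (by have : dot (a + b) b = dot a b + dot b b := by simp [dot]; ring
            omega) pq hpq
      have hmax : max (dot a a) (dot b b) + 1 ≤ max (dot (a+b) (a+b)) (dot b b) := by
        have : max (dot a a) (dot b b) + 1 ≤ dot (a+b) (a+b) := by omega
        omega
      push_cast
      omega

lemma sub_cover {d : ℕ} {a b : V2} (h : det2 a b = 1) (y : V2)
    (hy1 : 0 ≤ det2 a y) (hy2 : 0 ≤ det2 y b) :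
    ∃ pq ∈ subdiv d a b, 0 ≤ det2 pq.1 y ∧ 0 ≤ det2 y pq.2 := by
  induction d generalizing a b with
  | zero => exact ⟨(a, b), by simp [subdiv], hy1, hy2⟩
  | succ d ih =>
    rcases le_or_gt 0 (det2 (a + b) y) with hc | hc
    · obtain ⟨pq, hpq, h1, h2⟩ := ih (a := a + b) (b := b)
        (by rw [det2_med_right]; exact h) hc hy2
      exact ⟨pq, by simp [subdiv, List.mem_append]; right; exact hpq, h1, h2⟩
    · obtain ⟨pq, hpq, h1, h2⟩ := ih (a := a) (b := a + b)
        (by rw [det2_med_left]; exact h) hy1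
        (by have : det2 y (a + b) = - det2 (a + b) y := by simp [det2]; ring
            omega)
      exact ⟨pq, by simp [subdiv, List.mem_append]; left; exact hpq, h1, h2⟩

lemma sub_left_mem {d : ℕ} (a b : V2) : ∃ q', (a, q') ∈ subdiv d a b := by
  induction d generalizing a b with
  | zero => exact ⟨b, by simp [subdiv]⟩
  | succ d ih =>
    obtain ⟨q', hq'⟩ := ih a (a + b)
    exact ⟨q', by simp [subdiv, List.mem_append]; left; exact hq'⟩



lemma zero_of_dets {p q m : V2} (h : det2 p q = 1) (h1 : det2 p m = 0)
    (h2 : det2 m q = 0) : m = 0 := by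
  have c1 := cramer1 p q m h
  have c2 := cramer2 p q m h
  rw [h1, h2] at c1 c2
  simp at c1 c2
  exact Prod.ext c1 c2

lemma med_ne_zero {a b : V2} (h : det2 a b = 1) : a + b ≠ 0 := by
  intro hc
  have h1 : a.1 + b.1 = 0 := by
    have := congrArg Prod.fst hc; simpa using this
  have h2 : a.2 + b.2 = 0 := by
    have := congrArg Prod.snd hc; simpa using this
  have hb1 : b.1 = -a.1 := by omega
  have hb2 : b.2 = -a.2 := by omega
  have contra : a.1 * b.2 - a.2 * b.1 = 0 := by rw [hb1, hb2]; ring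
  simp [det2] at h; omega

lemma sub_no_interior {d : ℕ} {a b : V2} (h : det2 a b = 1) :
    ∀ pq ∈ subdiv d a b, ∀ p'q' ∈ subdiv d a b, ∀ n : V2,
      (n = p'q'.1 ∨ n = p'q'.2) → 1 ≤ det2 pq.1 n → 1 ≤ det2 n pq.2 → False := by
  induction d generalizing a b with
  | zero =>
    intro pq hpq p'q' hp'q' n hn h1 h2
    simp [subdiv] at hpq hp'q'
    have e : pq = p'q' := by rw [hpq, hp'q']
    subst e
    rcases hn with rfl | rfl
    · have hz : det2 pq.1 pq.1 = 0 := by simp [det2, mul_comm]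
      omega
    · have hz : det2 pq.2 pq.2 = 0 := by simp [det2, mul_comm]
      omega
  | succ d ih =>
    intro pq hpq p'q' hp'q' n hn h1 h2
    have hL : det2 a (a + b) = 1 := by rw [det2_med_left]; exact h
    have hR : det2 (a + b) b = 1 := by rw [det2_med_right]; exact h
    have hmz : (a + b) ≠ 0 := med_ne_zero h
    simp only [subdiv, List.mem_append] at hpq hp'q'
    rcases hpq with hpq | hpq <;> rcases hp'q' with hp'q' | hp'q'
    · exact ih hL pq hpq p'q' hp'q' n hn h1 h2
    · -- pq in left subtree, n an endpoint from the right subtree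
      obtain ⟨hdetpq, _, hpm, _, hqm⟩ := sub_inv hL pq hpq
      have hnm : 0 ≤ det2 (a + b) n := by
        obtain ⟨_, hn1, _, hn2, _⟩ := sub_inv hR p'q' hp'q'
        rcases hn with rfl | rfl
        · exact hn1
        · exact hn2
      have hdec := decomp_det pq.1 pq.2 n (a + b) hdetpq
      have e1 : det2 (a + b) pq.1 = - det2 pq.1 (a + b) := by simp [det2]; ring
      have e2 : det2 (a + b) pq.2 = - det2 pq.2 (a + b) := by simp [det2]; ring
      have hsum : 1 ≤ det2 pq.1 (a + b) + det2 pq.2 (a + b) := by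
        rcases eq_or_ne (det2 pq.1 (a + b)) 0 with hz | hz
        · rcases eq_or_ne (det2 (a + b) pq.2) 0 with hz2 | hz2
          · exact (hmz (zero_of_dets hdetpq hz hz2)).elim
          · omega
        · omega
      have t1 : det2 n pq.2 * det2 (a + b) pq.1 ≤ det2 (a + b) pq.1 := by
        nlinarith [mul_nonneg (by linarith : (0:ℤ) ≤ det2 n pq.2 - 1)
          (by omega : (0:ℤ) ≤ -(det2 (a + b) pq.1))]
      have t2 : det2 pq.1 n * det2 (a + b) pq.2 ≤ det2 (a + b) pq.2 := by
        nlinarith [mul_nonneg (by linarith : (0:ℤ) ≤ det2 pq.1 n - 1)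
          (by omega : (0:ℤ) ≤ -(det2 (a + b) pq.2))]
      linarith [hdec, t1, t2, hsum, hnm, e1, e2]
    · -- pq in right subtree, n an endpoint from the left subtree
      obtain ⟨hdetpq, hmp, _, hmq, _⟩ := sub_inv hR pq hpq
      have hnm : 0 ≤ det2 n (a + b) := by
        obtain ⟨_, _, hn1, _, hn2⟩ := sub_inv hL p'q' hp'q'
        rcases hn with rfl | rfl
        · exact hn1
        · exact hn2
      have hdec := decomp_det pq.1 pq.2 n (a + b) hdetpq
      have e1 : det2 n (a + b) = - det2 (a + b) n := by simp [det2]; ring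
      have er : det2 pq.1 (a + b) = - det2 (a + b) pq.1 := by simp [det2]; ring
      have hsum : 1 ≤ det2 (a + b) pq.1 + det2 (a + b) pq.2 := by
        rcases eq_or_ne (det2 (a + b) pq.1) 0 with hz | hz
        · rcases eq_or_ne (det2 (a + b) pq.2) 0 with hz2 | hz2
          · refine (hmz (zero_of_dets hdetpq (by omega) hz2)).elim
          · omega
        · omega
      have t1 : det2 (a + b) pq.1 ≤ det2 n pq.2 * det2 (a + b) pq.1 := by
        nlinarith [mul_nonneg (by linarith : (0:ℤ) ≤ det2 n pq.2 - 1) hmp]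
      have t2 : det2 (a + b) pq.2 ≤ det2 pq.1 n * det2 (a + b) pq.2 := by
        nlinarith [mul_nonneg (by linarith : (0:ℤ) ≤ det2 pq.1 n - 1) hmq]
      linarith [hdec, t1, t2, hsum, hnm, e1]
    · exact ih hR pq hpq p'q' hp'q' n hn h1 h2

def basePairs : List (V2 × V2) :=
  [((1,0),(1,1)), ((1,1),(0,1)), ((0,1),(-1,1)), ((-1,1),(-1,0)),
   ((-1,0),(-1,-1)), ((-1,-1),(0,-1)), ((0,-1),(1,-1)), ((1,-1),(1,0))]

lemma basePairs_inv : ∀ pq ∈ basePairs, det2 pq.1 pq.2 = 1 ∧ 0 ≤ dot pq.1 pq.2 := by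
  decide

lemma base_cover (y : V2) : ∃ pq ∈ basePairs, 0 ≤ det2 pq.1 y ∧ 0 ≤ det2 y pq.2 := by
  rcases le_or_gt 0 y.2 with h2 | h2
  · rcases le_or_gt y.2 y.1 with h3 | h3
    · exact ⟨((1,0),(1,1)), by simp [basePairs], by simp [det2]; omega, by simp [det2]; omega⟩
    · rcases le_or_gt 0 y.1 with h1 | h1
      · exact ⟨((1,1),(0,1)), by simp [basePairs], by simp [det2]; omega, by simp [det2]; omega⟩
      · rcases le_or_gt 0 (y.1 + y.2) with h4 | h4
        · exact ⟨((0,1),(-1,1)), by simp [basePairs], by simp [det2]; omega, by simp [det2]; omega⟩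
        · exact ⟨((-1,1),(-1,0)), by simp [basePairs], by simp [det2]; omega, by simp [det2]; omega⟩
  · rcases le_or_gt y.1 y.2 with h3 | h3
    · exact ⟨((-1,0),(-1,-1)), by simp [basePairs], by simp [det2]; omega, by simp [det2]; omega⟩
    · rcases le_or_gt y.1 0 with h1 | h1
      · exact ⟨((-1,-1),(0,-1)), by simp [basePairs], by simp [det2]; omega, by simp [det2]; omega⟩
      · rcases le_or_gt (y.1 + y.2) 0 with h4 | h4
        · exact ⟨((0,-1),(1,-1)), by simp [basePairs], by simp [det2]; omega, by simp [det2]; omega⟩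
        · exact ⟨((1,-1),(1,0)), by simp [basePairs], by simp [det2]; omega, by simp [det2]; omega⟩

lemma octant_disjoint : ∀ bi ∈ basePairs, ∀ bj ∈ basePairs, bi ≠ bj → ∀ n : V2,
    1 ≤ det2 bi.1 n → 1 ≤ det2 n bi.2 → 0 ≤ det2 bj.1 n → 0 ≤ det2 n bj.2 → False := by
  intro bi hbi bj hbj hne n h1 h2 h3 h4
  simp only [basePairs, List.mem_cons, List.not_mem_nil, or_false] at hbi hbj
  rcases hbi with rfl|rfl|rfl|rfl|rfl|rfl|rfl|rfl <;>
    rcases hbj with rfl|rfl|rfl|rfl|rfl|rfl|rfl|rfl <;>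
    simp only [det2] at h1 h2 h3 h4 <;>
    first
      | exact hne rfl
      | (norm_num at h1 h2 h3 h4; omega)


lemma open_cone_lift {p q n m : V2} (hdet : det2 p q = 1) (h1 : 1 ≤ det2 p n)
    (h2 : 1 ≤ det2 n q) (hm1 : 0 ≤ det2 m p) (hm2 : 0 ≤ det2 m q) (hm : m ≠ 0) :
    1 ≤ det2 m n := by
  have hdec := decomp_det p q n m hdet
  have hsum : 1 ≤ det2 m p + det2 m q := by
    rcases eq_or_ne (det2 m p) 0 with hz | hz
    · rcases eq_or_ne (det2 m q) 0 with hz2 | hz2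
      · have e : det2 p m = 0 := by
          have : det2 p m = - det2 m p := by simp [det2]; ring
          omega
        exact (hm (zero_of_dets hdet e hz2)).elim
      · omega
    · omega
  have t1 : det2 m p ≤ det2 n q * det2 m p := by
    nlinarith [mul_nonneg (by linarith : (0:ℤ) ≤ det2 n q - 1) hm1]
  have t2 : det2 m q ≤ det2 p n * det2 m q := by
    nlinarith [mul_nonneg (by linarith : (0:ℤ) ≤ det2 p n - 1) hm2]
  linarith [hdec, t1, t2, hsum]

lemma open_cone_lift' {p q n m : V2} (hdet : det2 p q = 1) (h1 : 1 ≤ det2 p n)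
    (h2 : 1 ≤ det2 n q) (hm1 : 0 ≤ det2 p m) (hm2 : 0 ≤ det2 q m) (hm : m ≠ 0) :
    1 ≤ det2 n m := by
  have hdec := decomp_det p q n m hdet
  have hsum : 1 ≤ det2 p m + det2 q m := by
    rcases eq_or_ne (det2 p m) 0 with hz | hz
    · rcases eq_or_ne (det2 q m) 0 with hz2 | hz2
      · have e : det2 m q = 0 := by
          have : det2 m q = - det2 q m := by simp [det2]; ring
          omega
        exact (hm (zero_of_dets hdet hz e)).elim
      · omega
    · omega
  have e1 : det2 m p = - det2 p m := by simp [det2]; ring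
  have e2 : det2 m q = - det2 q m := by simp [det2]; ring
  have en : det2 n m = - det2 m n := by simp [det2]; ring
  have t1 : det2 n q * det2 m p ≤ - det2 p m := by
    nlinarith [mul_nonneg (by linarith : (0:ℤ) ≤ det2 n q - 1) hm1]
  have t2 : det2 p n * det2 m q ≤ - det2 q m := by
    nlinarith [mul_nonneg (by linarith : (0:ℤ) ≤ det2 p n - 1) hm2]
  linarith [hdec, t1, t2, hsum, en]

section Family

variable (U : Finset (Finset V2))

/-- squared norm bound on rule elements -/
def r2 : ℕ := 1 + U.sup (fun X => X.sup (fun z => (dot z z).toNat))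

lemma z_le_r2 {X : Finset V2} (hX : X ∈ U) {z : V2} (hz : z ∈ X) :
    dot z z ≤ (r2 U : ℤ) := by
  have h1 : (dot z z).toNat ≤ U.sup (fun X => X.sup (fun z => (dot z z).toNat)) := by
    calc (dot z z).toNat ≤ X.sup (fun z => (dot z z).toNat) := Finset.le_sup (f := fun z => (dot z z).toNat) hz
    _ ≤ _ := Finset.le_sup (f := fun X => X.sup (fun z => (dot z z).toNat)) hX
  have h2 : 0 ≤ dot z z := by simp only [dot]; nlinarith [mul_self_nonneg z.1, mul_self_nonneg z.2]
  have := Int.toNat_of_nonneg h2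
  unfold r2
  push_cast
  omega

lemma r2_pos : 1 ≤ (r2 U : ℤ) := by unfold r2; push_cast; omega

def LEAVES : List (V2 × V2) := basePairs.flatMap (fun pq => subdiv (r2 U) pq.1 pq.2)

def NET : List V2 := (LEAVES U).flatMap (fun pq => [pq.1, pq.2])

lemma mem_net_of_leaf {pq : V2 × V2} (h : pq ∈ LEAVES U) :
    pq.1 ∈ NET U ∧ pq.2 ∈ NET U := by
  constructor <;> [refine List.mem_flatMap.mpr ⟨pq, h, ?_⟩; refine List.mem_flatMap.mpr ⟨pq, h, ?_⟩] <;> simp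

lemma leaves_inv : ∀ pq ∈ LEAVES U, det2 pq.1 pq.2 = 1 ∧ 0 ≤ dot pq.1 pq.2 ∧
    (r2 U : ℤ) < max (dot pq.1 pq.1) (dot pq.2 pq.2) := by
  intro pq hpq
  obtain ⟨bp, hbp, hmem⟩ := List.mem_flatMap.mp hpq
  obtain ⟨hdet, hdot⟩ := basePairs_inv bp hbp
  refine ⟨(sub_inv hdet pq hmem).1, sub_dot hdet hdot pq hmem, ?_⟩
  have h := sub_norm hdet hdot pq hmem
  have h1 : 1 ≤ dot bp.1 bp.1 := sq_pos_of_ne (ne_zero_of_det_left hdet)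
  omega

lemma leaves_cover (y : V2) :
    ∃ pq ∈ LEAVES U, 0 ≤ det2 pq.1 y ∧ 0 ≤ det2 y pq.2 := by
  obtain ⟨bp, hbp, hb1, hb2⟩ := base_cover y
  obtain ⟨hdet, _⟩ := basePairs_inv bp hbp
  obtain ⟨pq, hpq, h1, h2⟩ := sub_cover hdet y hb1 hb2
  exact ⟨pq, List.mem_flatMap.mpr ⟨bp, hbp, hpq⟩, h1, h2⟩

lemma net_no_interior : ∀ pq ∈ LEAVES U, ∀ n ∈ NET U,
    det2 pq.1 n ≤ 0 ∨ det2 n pq.2 ≤ 0 := by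
  intro pq hpq n hn
  by_contra hc
  push_neg at hc
  obtain ⟨hc1, hc2⟩ := hc
  obtain ⟨bi, hbi, hmi⟩ := List.mem_flatMap.mp hpq
  obtain ⟨p'q', hp'q', hnmem⟩ := List.mem_flatMap.mp hn
  obtain ⟨bj, hbj, hmj⟩ := List.mem_flatMap.mp hp'q'
  obtain ⟨hdeti, _⟩ := basePairs_inv bi hbi
  obtain ⟨hdetj, _⟩ := basePairs_inv bj hbj
  have hnn : n = p'q'.1 ∨ n = p'q'.2 := by simpa using hnmem
  by_cases hij : bi = bj
  · subst hij
    exact sub_no_interior hdeti pq hmi p'q' hmj n hnn (by omega) (by omega)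
  · -- lift pq-interior membership of n to base cone of bi
    obtain ⟨hdetpq, hi1, hi2, hi3, hi4⟩ := sub_inv hdeti pq hmi
    have hb1n : 1 ≤ det2 bi.1 n :=
      open_cone_lift hdetpq (by omega) (by omega) hi1 hi3 (ne_zero_of_det_left hdeti)
    have hb2n : 1 ≤ det2 n bi.2 :=
      open_cone_lift' hdetpq (by omega) (by omega) hi2 hi4 (ne_zero_of_det_right hdeti)
    -- n lies in the closed cone of bj
    obtain ⟨_, hj1, hj2, hj3, hj4⟩ := sub_inv hdetj p'q' hmj
    have hjn1 : 0 ≤ det2 bj.1 n := by rcases hnn with rfl | rfl; exacts [hj1, hj3]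
    have hjn2 : 0 ≤ det2 n bj.2 := by rcases hnn with rfl | rfl; exacts [hj2, hj4]
    exact octant_disjoint bi hbi bj hbj hij n hb1n hb2n hjn1 hjn2

end Family


section Family2

variable (U : Finset (Finset V2))

lemma dot_comm (a b : V2) : dot a b = dot b a := by simp [dot]; ring

lemma dot_neg_right (a b : V2) : dot a (-b) = - dot a b := by
  simp [dot]; ring

lemma net_primitive : ∀ n ∈ NET U, Int.gcd n.1 n.2 = 1 := by
  intro n hn
  obtain ⟨pq, hpq, hnmem⟩ := List.mem_flatMap.mp hn
  have hdet : det2 pq.1 pq.2 = 1 := (leaves_inv U pq hpq).1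
  have hnn : n = pq.1 ∨ n = pq.2 := by simpa using hnmem
  have hdvd : (Int.gcd n.1 n.2 : ℤ) ∣ det2 pq.1 pq.2 := by
    rcases hnn with rfl | rfl
    · exact dvd_sub (Dvd.dvd.mul_right (Int.gcd_dvd_left _ _) _)
        (Dvd.dvd.mul_right (Int.gcd_dvd_right _ _) _)
    · exact dvd_sub (Dvd.dvd.mul_left (Int.gcd_dvd_right _ _) _)
        (Dvd.dvd.mul_left (Int.gcd_dvd_left _ _) _)
  rw [hdet] at hdvd
  have := Int.eq_one_of_dvd_one (by positivity) hdvd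
  exact_mod_cast this

lemma parallel_cases {p n : V2} (hp : Int.gcd p.1 p.2 = 1)
    (hn : Int.gcd n.1 n.2 = 1) (h : det2 p n = 0) : n = p ∨ n = -p := by
  have hb := Int.gcd_eq_gcd_ab p.1 p.2
  rw [hp] at hb
  push_cast at hb
  set a := Int.gcdA p.1 p.2
  set b := Int.gcdB p.1 p.2
  set t := a * n.1 + b * n.2 with ht
  have hdet : p.1 * n.2 = p.2 * n.1 := by simp [det2] at h; linarith
  have h1 : n.1 = t * p.1 := by
    rw [ht]; linear_combination n.1 * hb - b * hdet
  have h2 : n.2 = t * p.2 := by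
    rw [ht]; linear_combination n.2 * hb + a * hdet
  have hgcd : Int.gcd n.1 n.2 = t.natAbs * Int.gcd p.1 p.2 := by
    rw [h1, h2]; exact Int.gcd_mul_left t p.1 p.2
  rw [hp, hn] at hgcd
  have ht1 : t = 1 ∨ t = -1 := by
    rcases Int.natAbs_eq t with he | he <;> omega
  rcases ht1 with he | he <;> rw [he] at h1 h2
  · left; ext <;> simp [h1, h2]
  · right; ext <;> simp [h1, h2]

/-- maximum squared norm over the net -/
def Mbig : ℤ := ((NET U).map (fun n => dot n n)).foldr max 1

lemma foldr_max_le_gen {x : ℤ} : ∀ (l : List ℤ), x ∈ l → ∀ c : ℤ, x ≤ l.foldr max c := by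
  intro l hx c
  induction l with
  | nil => simp at hx
  | cons a l ih =>
    rcases List.mem_cons.mp hx with rfl | hx'
    · exact le_max_left _ _
    · exact le_trans (ih hx') (le_max_right _ _)

lemma foldr_max_init : ∀ (l : List ℤ) (c : ℤ), c ≤ l.foldr max c := by
  intro l c
  induction l with
  | nil => simp
  | cons a l ih => exact le_trans ih (le_max_right _ _)

lemma Mbig_pos : 1 ≤ Mbig U := foldr_max_init _ _

lemma net_le_M : ∀ n ∈ NET U, dot n n ≤ Mbig U := by
  intro n hn
  exact foldr_max_le_gen _ (List.mem_map.mpr ⟨n, hn, rfl⟩) 1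

lemma net_sq_pos : ∀ n ∈ NET U, 1 ≤ dot n n := by
  intro n hn
  obtain ⟨pq, hpq, hnmem⟩ := List.mem_flatMap.mp hn
  have hdet : det2 pq.1 pq.2 = 1 := (leaves_inv U pq hpq).1
  have hnn : n = pq.1 ∨ n = pq.2 := by simpa using hnmem
  rcases hnn with rfl | rfl
  · exact sq_pos_of_ne (ne_zero_of_det_left hdet)
  · exact sq_pos_of_ne (ne_zero_of_det_right hdet)

/-- radius parameter -/
def Rbig : ℤ := 4 * (r2 U) * (Mbig U)^3

lemma Rbig_lb : 2 * (r2 U : ℤ) * (Mbig U)^2 ≤ Rbig U ∧ (r2 U : ℤ) ≤ Rbig U ∧ 1 ≤ Rbig U := by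
  have hM := Mbig_pos U
  have hr := r2_pos U
  unfold Rbig
  have hM3 : 1 ≤ Mbig U ^ 3 := by nlinarith [hM, sq_nonneg (Mbig U)]
  have hM2 : 0 ≤ Mbig U ^ 2 := sq_nonneg _
  refine ⟨?_, ?_, ?_⟩
  · nlinarith [mul_nonneg (mul_nonneg (by linarith : (0:ℤ) ≤ 2 * (r2 U:ℤ)) hM2)
      (by linarith : (0:ℤ) ≤ 2 * Mbig U - 1)]
  · nlinarith [mul_nonneg (by linarith : (0:ℤ) ≤ (r2 U:ℤ))
      (by linarith : (0:ℤ) ≤ 4 * Mbig U ^ 3 - 1)]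
  · nlinarith [hM3, hr]

/-- the protected hole -/
def Hset : Set V2 :=
  {y | ∀ n ∈ NET U, (dot y n : ℝ) ≤ (Rbig U : ℝ) * Real.sqrt ((dot n n : ℤ) : ℝ)}

lemma zero_mem_Hset : (0 : V2) ∈ Hset U := by
  intro n hn
  have h0 : dot 0 n = 0 := by simp [dot]
  rw [h0]
  push_cast
  have : (0:ℝ) ≤ (Rbig U : ℝ) := by
    have := (Rbig_lb U).2.2; exact_mod_cast le_trans (by norm_num) this
  positivity

/-- small vectors have small dot products against net vectors -/
lemma dot_small {z n : V2} (hz : dot z z ≤ (r2 U : ℤ)) (hn1 : 1 ≤ dot n n) :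
    (dot z n : ℝ) ≤ (r2 U : ℝ) * Real.sqrt ((dot n n : ℤ) : ℝ) := by
  have hr := r2_pos U
  have hr' : (0:ℝ) ≤ (r2 U : ℝ) := by positivity
  have hN : (0:ℝ) ≤ ((dot n n : ℤ) : ℝ) := by exact_mod_cast le_trans (by norm_num) hn1
  have hsq : ((dot z n : ℤ):ℝ)^2 ≤ (r2 U : ℝ) * ((dot n n : ℤ):ℝ) := by
    have hzr : (dot z n)^2 ≤ (r2 U : ℤ) * dot n n := by
      have hl := lagrange z n
      nlinarith [sq_nonneg (det2 z n),
        mul_nonneg (by omega : (0:ℤ) ≤ (r2 U : ℤ) - dot z z)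
          (by linarith : (0:ℤ) ≤ dot n n)]
    exact_mod_cast hzr
  rcases le_or_gt ((dot z n : ℤ):ℝ) 0 with hle | hpos
  · have hge : (0:ℝ) ≤ (r2 U:ℝ) * Real.sqrt ((dot n n : ℤ):ℝ) := by positivity
    linarith
  · have h1 : ((dot z n : ℤ):ℝ) ≤ Real.sqrt ((r2 U : ℝ) * ((dot n n : ℤ):ℝ)) :=
      (Real.le_sqrt hpos.le (by positivity)).mpr hsq
    have h2 : Real.sqrt ((r2 U : ℝ) * ((dot n n : ℤ):ℝ)) ≤
        (r2 U:ℝ) * Real.sqrt ((dot n n : ℤ):ℝ) := by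
      rw [Real.sqrt_le_iff]
      constructor
      · positivity
      · rw [mul_pow, Real.sq_sqrt hN]
        have h1r : (1:ℝ) ≤ (r2 U : ℝ) := by exact_mod_cast hr
        nlinarith
    linarith

/-- the main exclusion estimate: a net vector `n` separated from `y`'s cone by `c`
cannot have a large inner product with `y`. -/
lemma excl_main {y c n : V2} (hcM : dot c c ≤ Mbig U) (hnM : dot n n ≤ Mbig U)
    (hc1 : 1 ≤ dot c c) (hn1 : 1 ≤ dot n n)
    (hyc0 : 0 ≤ dot y c)
    (hycR : (dot y c : ℝ) ≤ (Rbig U : ℝ) * Real.sqrt ((dot c c : ℤ) : ℝ))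
    (hsign : det2 c y * det2 c n ≤ 0) (hpar : det2 c n ≠ 0) :
    (dot y n : ℝ) ≤ ((Rbig U : ℝ) - (r2 U : ℝ)) * Real.sqrt ((dot n n : ℤ) : ℝ) := by
  have hr := r2_pos U
  have hM := Mbig_pos U
  obtain ⟨hR1, hR2, hR3⟩ := Rbig_lb U
  have htri := tri_id c y n
  have hkey : dot y n * dot c c ≤ dot y c * dot n c := by linarith [htri, hsign]
  have hRr : (0:ℝ) ≤ ((Rbig U : ℝ) - (r2 U : ℝ)) := by
    have : (r2 U : ℤ) ≤ Rbig U := hR2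
    have h2 : ((r2 U : ℤ):ℝ) ≤ (Rbig U : ℝ) := by exact_mod_cast this
    push_cast at h2 ⊢; linarith
  have hsn : (0:ℝ) ≤ Real.sqrt ((dot n n : ℤ) : ℝ) := Real.sqrt_nonneg _
  rcases le_or_gt (dot n c) 0 with hnc | hnc
  · -- then dot y n ≤ 0
    have hyn : dot y n ≤ 0 := by nlinarith [hkey, hc1, hyc0, hnc]
    calc ((dot y n : ℤ):ℝ) ≤ 0 := by exact_mod_cast hyn
    _ ≤ _ := by positivity
  · -- main case
    set N : ℝ := ((dot n n : ℤ) : ℝ) with hN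
    set C : ℝ := ((dot c c : ℤ) : ℝ) with hC
    have hN1 : (1:ℝ) ≤ N := by rw [hN]; exact_mod_cast hn1
    have hC1 : (1:ℝ) ≤ C := by rw [hC]; exact_mod_cast hc1
    have hNM : N ≤ ((Mbig U : ℤ) : ℝ) := by rw [hN]; exact_mod_cast hnM
    have hCM : C ≤ ((Mbig U : ℤ) : ℝ) := by rw [hC]; exact_mod_cast hcM
    set a : ℝ := Real.sqrt N with ha
    set b : ℝ := Real.sqrt C with hb
    have ha2 : a^2 = N := Real.sq_sqrt (by linarith)
    have hb2 : b^2 = C := Real.sq_sqrt (by linarith)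
    have ha1 : (1:ℝ) ≤ a := by
      rw [ha, show (1:ℝ) = Real.sqrt 1 by rw [Real.sqrt_one]]
      exact Real.sqrt_le_sqrt (by linarith)
    have hb1 : (1:ℝ) ≤ b := by
      rw [hb, show (1:ℝ) = Real.sqrt 1 by rw [Real.sqrt_one]]
      exact Real.sqrt_le_sqrt (by linarith)
    -- integer bound on dot n c
    have hdint : (dot n c)^2 ≤ dot n n * dot c c - 1 := by
      have hl := lagrange n c
      have hdz : det2 n c ≠ 0 := by
        intro hz
        apply hpar
        have : det2 c n = - det2 n c := by simp [det2]; ring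
        omega
      have : 1 ≤ (det2 n c)^2 := by
        rcases hdz.lt_or_gt with hlt | hgt
        · nlinarith
        · nlinarith
      nlinarith
    have hdr : ((dot n c : ℤ):ℝ) ≤ Real.sqrt (N * C - 1) := by
      have hx : ((dot n c : ℤ):ℝ)^2 ≤ N * C - 1 := by
        have := hdint
        have hcast : ((dot n c : ℤ):ℝ)^2 ≤ ((dot n n * dot c c - 1 : ℤ):ℝ) := by
          exact_mod_cast this
        push_cast at hcast
        rw [hN, hC]; linarith [hcast]
      have hpos' : (0:ℝ) ≤ ((dot n c : ℤ):ℝ) := by exact_mod_cast hnc.le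
      exact (Real.le_sqrt hpos' (by nlinarith)).mpr hx
    -- √(NC−1) ≤ ab − 1/(2ab)
    have hab1 : (1:ℝ) ≤ a * b := by nlinarith
    have hsql : Real.sqrt (N * C - 1) ≤ a * b - 1 / (2 * (a * b)) := by
      rw [Real.sqrt_le_iff]
      constructor
      · have : 1 / (2 * (a*b)) ≤ 1 := by
          rw [div_le_one (by linarith)]; linarith
        linarith
      · have hab0 : (0:ℝ) < a * b := by linarith
        have : (a * b - 1 / (2 * (a * b)))^2 =
            a^2 * b^2 - 1 + (1 / (2 * (a*b)))^2 := by
          field_simp; ring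
        rw [this, ha2, hb2]
        nlinarith [sq_nonneg (1 / (2 * (a*b)))]
    -- combine
    have hchain : ((dot y c : ℤ):ℝ) * ((dot n c : ℤ):ℝ) ≤
        ((Rbig U : ℝ) * b) * (a * b - 1 / (2 * (a * b))) := by
      have h0yc : (0:ℝ) ≤ ((dot y c : ℤ):ℝ) := by exact_mod_cast hyc0
      have h0nc : (0:ℝ) ≤ ((dot n c : ℤ):ℝ) := by exact_mod_cast hnc.le
      have hycb : ((dot y c : ℤ):ℝ) ≤ (Rbig U : ℝ) * b := by rw [hb, hC]; exact hycR
      exact mul_le_mul hycb (le_trans hdr hsql) h0nc (by positivity)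
    have hfin : ((Rbig U : ℝ) * b) * (a * b - 1 / (2 * (a * b))) ≤
        ((Rbig U : ℝ) - (r2 U : ℝ)) * a * (b^2) := by
      have hab0 : (0:ℝ) < a * b := by linarith
      have hRge : 2 * (r2 U : ℝ) * (a^2 * b^2) ≤ (Rbig U : ℝ) := by
        have hM1 : (1:ℝ) ≤ ((Mbig U : ℤ):ℝ) := by exact_mod_cast hM
        have hr1 : (1:ℝ) ≤ (r2 U : ℝ) := by exact_mod_cast hr
        have haM : a^2 ≤ ((Mbig U : ℤ):ℝ) := by rw [ha2]; exact hNM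
        have hbM : b^2 ≤ ((Mbig U : ℤ):ℝ) := by rw [hb2]; exact hCM
        have habM : a^2 * b^2 ≤ ((Mbig U : ℤ):ℝ)^2 := by
          nlinarith [sq_nonneg a, sq_nonneg b]
        have hcast : 2 * (r2 U : ℝ) * ((Mbig U : ℤ):ℝ)^2 ≤ (Rbig U : ℝ) := by
          exact_mod_cast hR1
        nlinarith [mul_le_mul_of_nonneg_left habM
          (by linarith : (0:ℝ) ≤ 2 * (r2 U : ℝ))]
      have expand : ((Rbig U : ℝ) * b) * (a * b - 1 / (2 * (a * b))) =
          (Rbig U : ℝ) * a * b^2 - (Rbig U : ℝ) / (2 * a) := by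
        field_simp
      have expand2 : ((Rbig U : ℝ) - (r2 U : ℝ)) * a * (b^2) =
          (Rbig U : ℝ) * a * b^2 - (r2 U : ℝ) * a * b^2 := by ring
      rw [expand, expand2]
      have : (r2 U : ℝ) * a * b^2 ≤ (Rbig U : ℝ) / (2 * a) := by
        rw [le_div_iff₀ (by linarith)]
        calc (r2 U : ℝ) * a * b^2 * (2 * a) = 2 * (r2 U : ℝ) * (a^2 * b^2) := by ring
        _ ≤ (Rbig U : ℝ) := hRge
      linarith
    -- divide by C = b^2 ≥ 1
    have hmain : ((dot y n : ℤ):ℝ) * C ≤ (((Rbig U : ℝ) - (r2 U : ℝ)) * a) * C := by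
      have hkey' : ((dot y n : ℤ):ℝ) * C ≤ ((dot y c : ℤ):ℝ) * ((dot n c : ℤ):ℝ) := by
        have := hkey
        have hcast : ((dot y n * dot c c : ℤ):ℝ) ≤ ((dot y c * dot n c : ℤ):ℝ) := by
          exact_mod_cast this
        push_cast at hcast
        rw [hC]; linarith [hcast]
      calc ((dot y n : ℤ):ℝ) * C ≤ ((dot y c : ℤ):ℝ) * ((dot n c : ℤ):ℝ) := hkey'
      _ ≤ ((Rbig U : ℝ) * b) * (a * b - 1 / (2 * (a * b))) := hchain
      _ ≤ ((Rbig U : ℝ) - (r2 U : ℝ)) * a * (b^2) := hfin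
      _ = (((Rbig U : ℝ) - (r2 U : ℝ)) * a) * C := by rw [hb2]
    have hCpos : (0:ℝ) < C := by linarith
    have := le_of_mul_le_mul_right (by linarith [hmain] : ((dot y n : ℤ):ℝ) * C ≤ (((Rbig U : ℝ) - (r2 U : ℝ)) * a) * C) hCpos
    rw [ha, hN] at this
    linarith [this]

/-- escape move along the second endpoint of a corner -/
lemma mixed_lemma {p o z : V2} (hdet : det2 p o ^ 2 = 1) (hdot : 0 ≤ dot p o)
    (hz : dot z z ≤ (r2 U : ℤ)) (hp : (r2 U : ℤ) < dot p p) (hzp : dot z p ≤ 0) :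
    dot z o ≤ 0 := by
  by_contra hc
  push_neg at hc
  have hc1 : 1 ≤ dot z o := hc
  have htri := tri_id p z o
  -- dot z o * dot p p = dot z p * dot o p + det2 p z * det2 p o
  have hop : dot o p = dot p o := dot_comm o p
  have hP1 : 1 ≤ dot p p := by have := r2_pos U; omega
  have hT : dot p p ≤ det2 p z * det2 p o := by nlinarith [htri, hzp, hdot, hc1, hP1]
  have hT2 : (det2 p z * det2 p o)^2 = (det2 p z)^2 := by
    have : (det2 p o)^2 = 1 := hdet
    nlinarith [this]
  have hlag := lagrange p z
  have hzz0 : 0 ≤ dot z z := by nlinarith [lagrange z z, sq_nonneg (dot z z), sq_nonneg (det2 z z)]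
  -- (det2 p z)^2 ≤ dot p p * dot z z ≤ dot p p * r2
  have hb : (det2 p z)^2 ≤ dot p p * (r2 U : ℤ) := by nlinarith [sq_nonneg (dot p z)]
  nlinarith [hT, hT2, hb, hP1, hp]

/-- stability applied in a rational direction -/
lemma stable_dir (hS : StableAll U) {X : Finset V2} (hX : X ∈ U) (p : V2)
    (hp : 1 ≤ dot p p) : ∃ z ∈ X, dot z p ≤ 0 := by
  have hPpos : (0:ℝ) < ((dot p p : ℤ):ℝ) := by exact_mod_cast hp
  set s : ℝ := Real.sqrt ((dot p p : ℤ):ℝ) with hs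
  have hspos : 0 < s := Real.sqrt_pos.mpr hPpos
  have hs2 : s^2 = ((dot p p : ℤ):ℝ) := Real.sq_sqrt hPpos.le
  have hu : ((-(p.1:ℝ)/s, -(p.2:ℝ)/s) : ℝ × ℝ).1 ^ 2 + ((-(p.1:ℝ)/s, -(p.2:ℝ)/s) : ℝ × ℝ).2 ^ 2 = 1 := by
    simp only
    rw [div_pow, div_pow, ← add_div, div_eq_one_iff_eq (by positivity)]
    rw [hs2]
    simp [dot]
    push_cast
    ring
  obtain ⟨z, hzX, hz⟩ := hS _ hu X hX
  refine ⟨z, hzX, ?_⟩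
  simp only at hz
  have : (z.1:ℝ) * (-(p.1:ℝ)/s) + (z.2:ℝ) * (-(p.2:ℝ)/s) = -(((dot z p : ℤ):ℝ))/s := by
    simp [dot]; push_cast; field_simp; ring
  rw [this] at hz
  have h2 : (0:ℝ) ≤ -((dot z p : ℤ):ℝ) := by
    by_contra hcon
    push_neg at hcon
    have : -((dot z p : ℤ):ℝ)/s < 0 := div_neg_of_neg_of_pos (by linarith) hspos
    linarith
  have : ((dot z p : ℤ):ℝ) ≤ 0 := by linarith
  exact_mod_cast this

end Family2


section Main

variable (U : Finset (Finset V2))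

lemma step_bound {y n c z : V2} (hy : y ∈ Hset U) (hn : n ∈ NET U) (hc : c ∈ NET U)
    (hne : n ≠ c) (hyc0 : 0 ≤ dot y c) (hsign : det2 c y * det2 c n ≤ 0)
    (hzz : dot z z ≤ (r2 U : ℤ)) :
    ((dot (y + z) n : ℤ) : ℝ) ≤ (Rbig U : ℝ) * Real.sqrt ((dot n n : ℤ) : ℝ) := by
  have hn1 := net_sq_pos U n hn
  have hc1 := net_sq_pos U c hc
  have hdzn := dot_small U hzz hn1
  have hadd : dot (y + z) n = dot y n + dot z n := dot_add_left y z n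
  have hcastadd : ((dot (y + z) n : ℤ) : ℝ) = ((dot y n : ℤ):ℝ) + ((dot z n : ℤ):ℝ) := by
    exact_mod_cast congrArg (fun t : ℤ => (t : ℝ)) hadd
  have hsn : (0:ℝ) ≤ Real.sqrt ((dot n n : ℤ) : ℝ) := Real.sqrt_nonneg _
  have hr2R : (r2 U : ℝ) ≤ (Rbig U : ℝ) := by exact_mod_cast (Rbig_lb U).2.1
  rcases eq_or_ne (det2 c n) 0 with hpar | hpar
  · -- n is parallel to c, hence n = -c
    have hncase := parallel_cases (net_primitive U c hc) (net_primitive U n hn) hpar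
    have hnc : n = -c := by
      rcases hncase with h | h
      · exact absurd h hne
      · exact h
    have hyn : dot y n ≤ 0 := by
      rw [hnc, dot_neg_right]; omega
    have h1 : ((dot y n : ℤ):ℝ) ≤ 0 := by exact_mod_cast hyn
    have h2 : (r2 U : ℝ) * Real.sqrt ((dot n n : ℤ) : ℝ) ≤
        (Rbig U : ℝ) * Real.sqrt ((dot n n : ℤ) : ℝ) :=
      mul_le_mul_of_nonneg_right hr2R hsn
    linarith [hdzn, hcastadd]
  · have hex := excl_main U (net_le_M U c hc) (net_le_M U n hn) hc1 hn1 hyc0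
      (hy c hc) hsign hpar
    have hexp : ((Rbig U : ℝ) - (r2 U : ℝ)) * Real.sqrt ((dot n n : ℤ) : ℝ) +
        (r2 U : ℝ) * Real.sqrt ((dot n n : ℤ) : ℝ) =
        (Rbig U : ℝ) * Real.sqrt ((dot n n : ℤ) : ℝ) := by ring
    linarith [hdzn, hcastadd, hex]

lemma hset_invariant (hS : StableAll U) :
    ∀ y ∈ Hset U, ∀ X ∈ U, ∃ z ∈ X, y + z ∈ Hset U := by
  intro y hy X hX
  obtain ⟨pq, hpq, hbeta, halpha⟩ := leaves_cover U y
  obtain ⟨hdet1, hdotpq, hnorm⟩ := leaves_inv U pq hpq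
  obtain ⟨hpmem, hqmem⟩ := mem_net_of_leaf U hpq
  have hp1 := net_sq_pos U _ hpmem
  have hq1 := net_sq_pos U _ hqmem
  have hqp : dot pq.2 pq.1 = dot pq.1 pq.2 := dot_comm _ _
  have hyp0 : 0 ≤ dot y pq.1 := by
    have hd := decomp_dot pq.1 pq.2 y pq.1 hdet1
    have t1 := mul_nonneg halpha (by linarith : (0:ℤ) ≤ dot pq.1 pq.1)
    have t2 := mul_nonneg hbeta (by omega : (0:ℤ) ≤ dot pq.2 pq.1)
    linarith [hd]
  have hyq0 : 0 ≤ dot y pq.2 := by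
    have hd := decomp_dot pq.1 pq.2 y pq.2 hdet1
    have t1 := mul_nonneg halpha (by linarith : (0:ℤ) ≤ dot pq.1 pq.2)
    have t2 := mul_nonneg hbeta (by linarith : (0:ℤ) ≤ dot pq.2 pq.2)
    linarith [hd]
  have hqsign : det2 pq.2 y ≤ 0 := by
    have : det2 pq.2 y = - det2 y pq.2 := by simp [det2]; ring
    omega
  rcases lt_max_iff.mp hnorm with hbig | hbig
  · -- anchor pq.1
    obtain ⟨z, hzX, hzp⟩ := stable_dir U hS hX pq.1 (by omega)
    have hzz := z_le_r2 U hX hzX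
    refine ⟨z, hzX, ?_⟩
    intro n hn
    by_cases he1 : n = pq.1
    · have hzn : dot z n ≤ 0 := by rw [he1]; exact hzp
      have hle : dot (y + z) n ≤ dot y n := by
        have := dot_add_left y z n; omega
      have : ((dot (y + z) n : ℤ):ℝ) ≤ ((dot y n : ℤ):ℝ) := by exact_mod_cast hle
      linarith [hy n hn]
    by_cases he2 : n = pq.2
    · have hzn : dot z n ≤ 0 := by
        rw [he2]
        exact mixed_lemma U (by rw [hdet1]; norm_num) hdotpq hzz hbig hzp
      have hle : dot (y + z) n ≤ dot y n := by
        have := dot_add_left y z n; omega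
      have : ((dot (y + z) n : ℤ):ℝ) ≤ ((dot y n : ℤ):ℝ) := by exact_mod_cast hle
      linarith [hy n hn]
    · rcases net_no_interior U pq hpq n hn with hcase | hcase
      · exact step_bound U hy hn hpmem he1 hyp0
          (mul_nonpos_of_nonneg_of_nonpos hbeta hcase) hzz
      · have hsign : det2 pq.2 y * det2 pq.2 n ≤ 0 := by
          have e2 : det2 pq.2 n = - det2 n pq.2 := by simp [det2]; ring
          exact mul_nonpos_of_nonpos_of_nonneg hqsign (by omega)
        exact step_bound U hy hn hqmem he2 hyq0 hsign hzz
  · -- anchor pq.2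
    obtain ⟨z, hzX, hzp⟩ := stable_dir U hS hX pq.2 (by omega)
    have hzz := z_le_r2 U hX hzX
    refine ⟨z, hzX, ?_⟩
    intro n hn
    by_cases he2 : n = pq.2
    · have hzn : dot z n ≤ 0 := by rw [he2]; exact hzp
      have hle : dot (y + z) n ≤ dot y n := by
        have := dot_add_left y z n; omega
      have : ((dot (y + z) n : ℤ):ℝ) ≤ ((dot y n : ℤ):ℝ) := by exact_mod_cast hle
      linarith [hy n hn]
    by_cases he1 : n = pq.1
    · have hzn : dot z n ≤ 0 := by
        rw [he1]
        refine mixed_lemma U (p := pq.2) (o := pq.1) ?_ (by omega) hzz hbig hzp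
        have e : det2 pq.2 pq.1 = - det2 pq.1 pq.2 := by simp [det2]; ring
        rw [e, hdet1]
        norm_num
      have hle : dot (y + z) n ≤ dot y n := by
        have := dot_add_left y z n; omega
      have : ((dot (y + z) n : ℤ):ℝ) ≤ ((dot y n : ℤ):ℝ) := by exact_mod_cast hle
      linarith [hy n hn]
    · rcases net_no_interior U pq hpq n hn with hcase | hcase
      · exact step_bound U hy hn hpmem he1 hyp0
          (mul_nonpos_of_nonneg_of_nonpos hbeta hcase) hzz
      · have hsign : det2 pq.2 y * det2 pq.2 n ≤ 0 := by
          have e2 : det2 pq.2 n = - det2 n pq.2 := by simp [det2]; ring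
          exact mul_nonpos_of_nonpos_of_nonneg hqsign (by omega)
        exact step_bound U hy hn hqmem he2 hyq0 hsign hzz

lemma base_first_mem : ∀ bp ∈ basePairs, bp.1 ∈ NET U := by
  intro bp hbp
  obtain ⟨q', hq'⟩ := sub_left_mem (d := r2 U) bp.1 bp.2
  have hleaf : (bp.1, q') ∈ LEAVES U := List.mem_flatMap.mpr ⟨bp, hbp, hq'⟩
  exact (mem_net_of_leaf U hleaf).1

lemma coord_bound {y : V2} (hy : y ∈ Hset U) :
    ((y.1 : ℤ):ℝ) ≤ (Rbig U : ℝ) ∧ (-(y.1 : ℤ):ℝ) ≤ (Rbig U : ℝ) ∧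
    ((y.2 : ℤ):ℝ) ≤ (Rbig U : ℝ) ∧ (-(y.2 : ℤ):ℝ) ≤ (Rbig U : ℝ) := by
  have h10 : ((1,0) : V2) ∈ NET U := base_first_mem U ((1,0),(1,1)) (by simp [basePairs])
  have h01 : ((0,1) : V2) ∈ NET U := base_first_mem U ((0,1),(-1,1)) (by simp [basePairs])
  have hm10 : ((-1,0) : V2) ∈ NET U := base_first_mem U ((-1,0),(-1,-1)) (by simp [basePairs])
  have h0m1 : ((0,-1) : V2) ∈ NET U := base_first_mem U ((0,-1),(1,-1)) (by simp [basePairs])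
  have e1 : dot y ((1,0) : V2) = y.1 := by simp [dot]
  have e2 : dot y ((0,1) : V2) = y.2 := by simp [dot]
  have e3 : dot y ((-1,0) : V2) = -y.1 := by simp [dot]
  have e4 : dot y ((0,-1) : V2) = -y.2 := by simp [dot]
  have s1 : dot ((1,0) : V2) ((1,0) : V2) = 1 := by simp [dot]
  have s2 : dot ((0,1) : V2) ((0,1) : V2) = 1 := by simp [dot]
  have s3 : dot ((-1,0) : V2) ((-1,0) : V2) = 1 := by simp [dot]
  have s4 : dot ((0,-1) : V2) ((0,-1) : V2) = 1 := by simp [dot]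
  have b1 := hy _ h10; have b2 := hy _ h01; have b3 := hy _ hm10; have b4 := hy _ h0m1
  rw [e1, s1] at b1; rw [e2, s2] at b2; rw [e3, s3] at b3; rw [e4, s4] at b4
  norm_num [Real.sqrt_one] at b1 b2 b3 b4
  refine ⟨by exact_mod_cast b1, by push_cast at b3 ⊢; linarith,
    by exact_mod_cast b2, by push_cast at b4 ⊢; linarith⟩

lemma ustep_mono {S T : Set V2} (h : S ⊆ T) : ustep U S ⊆ ustep U T := by
  intro w hw
  rcases hw with hw | hw
  · exact Or.inl (h hw)
  · obtain ⟨X, hX, hall⟩ := hw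
    exact Or.inr ⟨X, hX, fun y hy => h (hall y hy)⟩

lemma closure_subset {A S : Set V2} (hA : A ⊆ S) (hcl : ustep U S ⊆ S) :
    uclosure U A ⊆ S := by
  intro w hw
  obtain ⟨k, hk⟩ := Set.mem_iUnion.mp hw
  clear hw
  induction k generalizing w with
  | zero => exact hA hk
  | succ k ih =>
    rw [Function.iterate_succ_apply'] at hk
    rcases hk with hk | hk
    · exact ih hk
    · obtain ⟨X, hX, hall⟩ := hk
      exact hcl (Or.inr ⟨X, hX, fun y hy => ih (hall y hy)⟩)

theorem final_statement (hS : StableAll U) :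
    ∃ ρ : ℝ, 0 < ρ ∧ ∀ A : Set V2, ∀ x ∈ uclosure U A, ∃ y ∈ A, edist2 x y ≤ ρ := by
  refine ⟨2 * (Rbig U : ℝ), ?_, ?_⟩
  · have h1 : (1:ℤ) ≤ Rbig U := (Rbig_lb U).2.2
    have : (1:ℝ) ≤ (Rbig U : ℝ) := by exact_mod_cast h1
    linarith
  intro A x hx
  by_contra hcon
  push_neg at hcon
  -- the protected set
  set S : Set V2 := {v | (v - x) ∉ Hset U} with hSdef
  have hAS : A ⊆ S := by
    intro y hyA
    intro hyH
    have hb := coord_bound U hyH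
    have hcoord1 : |((y.1 - x.1 : ℤ):ℝ)| ≤ (Rbig U : ℝ) := by
      rw [abs_le]
      constructor
      · have := hb.2.1
        push_cast at this ⊢
        simp [Prod.fst_sub] at this ⊢
        linarith
      · have := hb.1
        push_cast at this ⊢
        simp [Prod.fst_sub] at this ⊢
        linarith
    have hcoord2 : |((y.2 - x.2 : ℤ):ℝ)| ≤ (Rbig U : ℝ) := by
      rw [abs_le]
      constructor
      · have := hb.2.2.2
        push_cast at this ⊢
        simp [Prod.snd_sub] at this ⊢
        linarith
      · have := hb.2.2.1
        push_cast at this ⊢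
        simp [Prod.snd_sub] at this ⊢
        linarith
    have hlt := hcon y hyA
    have hRpos : (0:ℝ) ≤ (Rbig U : ℝ) := by
      have : (1:ℤ) ≤ Rbig U := (Rbig_lb U).2.2
      have h2 : (1:ℝ) ≤ (Rbig U : ℝ) := by exact_mod_cast this
      linarith
    have hedist : edist2 x y ≤ 2 * (Rbig U : ℝ) := by
      unfold edist2
      rw [Real.sqrt_le_iff]
      constructor
      · linarith
      · have e1 : ((x.1 - y.1 : ℤ):ℝ) = -((y.1 - x.1 : ℤ):ℝ) := by push_cast; ring
        have e2 : ((x.2 - y.2 : ℤ):ℝ) = -((y.2 - x.2 : ℤ):ℝ) := by push_cast; ring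
        rw [e1, e2]
        have a1 := abs_le.mp hcoord1
        have a2 := abs_le.mp hcoord2
        nlinarith [a1.1, a1.2, a2.1, a2.2, hRpos]
    linarith
  have hclosed : ustep U S ⊆ S := by
    intro w hw
    rcases hw with hw | hw
    · exact hw
    · obtain ⟨X, hX, hall⟩ := hw
      intro hwH
      obtain ⟨z, hzX, hzH⟩ := hset_invariant U hS (w - x) hwH X hX
      have hwz := hall z hzX
      apply hwz
      have : w + z - x = w - x + z := by
        ext <;> simp [Prod.fst_add, Prod.snd_add, Prod.fst_sub, Prod.snd_sub] <;> ring
      rw [this]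
      exact hzH
  have hxS : x ∈ S := closure_subset U hAS hclosed hx
  apply hxS
  have : x - x = (0 : V2) := by ext <;> simp
  rw [this]
  exact zero_mem_Hset U

end Main

end BP

/-- **Corollary 4.6.** If the stable set of the two-dimensional update family `U` is all
of `S¹`, then there exists `ρ̂ > 0` such that for every initial set `A ⊆ ℤ²` and every
`x ∈ ⟨A⟩_U`, the initial set meets the (discrete) Euclidean ball `B_ρ̂(x)`. -/
theorem statement12 (U : Finset (Finset V2)) (hU0 : ∀ X ∈ U, ((0, 0) : V2) ∉ X)
    (hS : StableAll U) :
    ∃ ρ : ℝ, 0 < ρ ∧ ∀ A : Set V2, ∀ x ∈ uclosure U A, ∃ y ∈ A, edist2 x y ≤ ρ := by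
  exact BP.final_statement U hS
end

section
/- Let U be a two-dimensional update family with stable set S(U) = S¹ and dilation radius β ≥ 1. There exists a constant λ ∈ (0, 30β²] such that for every initial set A ⊆ ℤ²: if the closure ⟨A⟩_U is connected (in the nearest-neighbour lattice graph on ℤ²), then |⟨A⟩_U| ≤ λ·|A|. -/
open scoped Classical

/-- Extended cardinality of a set, valued in `ℝ≥0∞`. -/
noncomputable def ecardR (S : Set V2) : ENNReal :=
  WithTop.map (Nat.cast : ℕ → NNReal) S.encard

lemma ecardR_mono {S T : Set V2} (h : S ⊆ T) : ecardR S ≤ ecardR T := by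
  unfold ecardR
  exact (Nat.mono_cast (α := NNReal)).withTop_map (Set.encard_mono h)

lemma ecardR_coe (s : Finset V2) : ecardR ↑s = (s.card : ENNReal) := by
  unfold ecardR
  rw [Set.encard_coe_eq_coe_finsetCard]
  rfl

lemma ecardR_infinite {S : Set V2} (h : S.Infinite) : ecardR S = ⊤ := by
  unfold ecardR
  rw [h.encard_eq]
  rfl


/-- **Lemma 4.11.** Let `U` be a two-dimensional update family with stable set all of
`S¹` and dilation radius `β ≥ 1`. There is a constant `λ ∈ (0, 30β²]` such that for
every initial set `A ⊆ ℤ²`: if `⟨A⟩_U` is connected in the nearest-neighbour lattice,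
then `|⟨A⟩_U| ≤ λ |A|`. -/
theorem statement15 (U : Finset (Finset V2)) (hU0 : ∀ X ∈ U, ((0, 0) : V2) ∉ X)
    (hS : StableAll U) (β : ℝ) (hβ1 : 1 ≤ β) (hβ : DilationProp U β) :
    ∃ lam : ℝ, 0 < lam ∧ lam ≤ 30 * β ^ 2 ∧
      ∀ A : Set V2, ConnIn (uclosure U A) →
        ecardR (uclosure U A) ≤ ENNReal.ofReal lam * ecardR A := by
  have hβ0 : (0:ℝ) < β := lt_of_lt_of_le one_pos hβ1
  refine ⟨9 * β ^ 2, by positivity, by nlinarith, ?_⟩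
  intro A _
  set m : ℕ := ⌊β⌋₊ with hm
  have hmβ : (m : ℝ) ≤ β := Nat.floor_le hβ0.le
  -- the box around a point
  set box : V2 → Finset V2 := fun y =>
    (Finset.Icc (y.1 - m) (y.1 + m)) ×ˢ (Finset.Icc (y.2 - m) (y.2 + m)) with hbox
  have hboxcard : ∀ y, (box y).card = (2 * m + 1) ^ 2 := by
    intro y
    simp only [hbox, Finset.card_product, Int.card_Icc]
    have : ∀ a : ℤ, (a + m + 1 - (a - m)).toNat = 2 * m + 1 := by intro a; omega
    rw [this, this]; ring
  have hmem : ∀ x y : V2, edist2 x y ≤ β → x ∈ box y := by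
    intro x y hxy
    have key : ∀ a b : ℝ, Real.sqrt (a ^ 2 + b ^ 2) ≤ β → |a| ≤ β := by
      intro a b h
      calc |a| = Real.sqrt (a ^ 2) := (Real.sqrt_sq_eq_abs a).symm
        _ ≤ Real.sqrt (a ^ 2 + b ^ 2) := Real.sqrt_le_sqrt (by nlinarith [sq_nonneg b])
        _ ≤ β := h
    unfold edist2 at hxy
    have h1 : |((x.1 - y.1 : ℤ) : ℝ)| ≤ β := key _ _ hxy
    have h2 : |((x.2 - y.2 : ℤ) : ℝ)| ≤ β := key _ _ (by rw [add_comm] at hxy; exact hxy)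
    have n1 : (x.1 - y.1).natAbs ≤ m := Nat.le_floor (by simpa [Nat.cast_natAbs] using h1)
    have n2 : (x.2 - y.2).natAbs ≤ m := Nat.le_floor (by simpa [Nat.cast_natAbs] using h2)
    simp only [hbox, Finset.mem_product, Finset.mem_Icc]
    omega
  rcases Set.finite_or_infinite A with hA | hA
  · -- finite case
    obtain ⟨s, rfl⟩ : ∃ s : Finset V2, A = ↑s := ⟨hA.toFinset, by simp⟩
    have hsub : uclosure U ↑s ⊆ ↑(s.biUnion box) := by
      intro x hx
      obtain ⟨y, hyA, hyd⟩ := hβ _ x hx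
      simp only [Finset.coe_biUnion, Set.mem_iUnion]
      exact ⟨y, hyA, hmem x y hyd⟩
    calc ecardR (uclosure U ↑s) ≤ ecardR ↑(s.biUnion box) := ecardR_mono hsub
      _ = ((s.biUnion box).card : ENNReal) := ecardR_coe _
      _ ≤ ((s.card * ((2 * m + 1) ^ 2) : ℕ) : ENNReal) := by
          exact_mod_cast Finset.card_biUnion_le_card_mul _ _ _
            (fun y _ => (hboxcard y).le)
      _ ≤ ENNReal.ofReal (9 * β ^ 2) * ecardR ↑s := by
          rw [ecardR_coe, Nat.cast_mul, mul_comm]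
          refine mul_le_mul_left ?_ _
          have h2 : (((2 * m + 1) ^ 2 : ℕ) : ℝ) ≤ 9 * β ^ 2 := by
            push_cast; nlinarith [Nat.cast_nonneg (α := ℝ) m]
          rw [← ENNReal.ofReal_natCast]
          exact ENNReal.ofReal_le_ofReal h2
  · -- infinite case
    rw [ecardR_infinite hA, ENNReal.mul_top]
    · exact le_top
    · simp only [ne_eq, ENNReal.ofReal_eq_zero, not_le]
      nlinarith
end

section
/- Fix integers 1 ≤ a ≤ b and L, n₁, n₂ ∈ ℕ. Let B_{n₁,n₂} be the collection of all translates contained in [L]³ of beams H × [w] with w ≤ n₁ and |H| ≤ n₂. Then |B_{n₁,n₂}| ≤ n₁·L³·(3e)^{n₂}. -/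
open scoped Classical

/-- Vertices of the three-dimensional lattice. -/
abbrev V3 : Type := ℤ × ℤ × ℤ

/-- The anisotropic neighbourhood `N_{a,b,c} ⊂ ℤ³`:
nonzero multiples of `e₁` up to `a`, of `e₂` up to `b`, of `e₃` up to `c`. -/
def N3 (a b c : ℕ) : Set V3 :=
  {u | (u.1 ≠ 0 ∧ |u.1| ≤ (a : ℤ) ∧ u.2.1 = 0 ∧ u.2.2 = 0) ∨
       (u.2.1 ≠ 0 ∧ |u.2.1| ≤ (b : ℤ) ∧ u.1 = 0 ∧ u.2.2 = 0) ∨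
       (u.2.2 ≠ 0 ∧ |u.2.2| ≤ (c : ℤ) ∧ u.1 = 0 ∧ u.2.1 = 0)}

/-- One step of the `r`-neighbour bootstrap dynamics inside the region `dom`:
a healthy vertex of `dom` becomes infected when it has at least `r` infected
neighbours (its neighbours being its translates by `N_{a,b,c}`). -/
def step3 (a b c r : ℕ) (dom S : Set V3) : Set V3 :=
  S ∪ {x | x ∈ dom ∧ r ≤ {u | u ∈ N3 a b c ∧ x + u ∈ S}.ncard}

/-- The closure `⟨A⟩` of `A` under the `N_r^{a,b,c}`-bootstrap process in `dom`. -/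
def closure3 (a b c r : ℕ) (dom A : Set V3) : Set V3 :=
  ⋃ n, (step3 a b c r dom)^[n] (A ∩ dom)

/-- The rectangle `[x]×[y]×[z]` as a finset of `ℤ³`. -/
noncomputable def rectF (x y z : ℕ) : Finset V3 :=
  Finset.Icc (1 : ℤ) (x : ℤ) ×ˢ (Finset.Icc (1 : ℤ) (y : ℤ) ×ˢ Finset.Icc (1 : ℤ) (z : ℤ))

/-- The rectangle `[x]×[y]×[z]` as a set. -/
def rect (x y z : ℕ) : Set V3 := ↑(rectF x y z)

/-- The event `I•(R)`: the region `R` is internally filled by the initial set `A`,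
i.e. `R ⊆ ⟨A ∩ R⟩` for the process restricted to `R`. -/
def IFill (a b c r : ℕ) (R : Set V3) (A : Finset V3) : Prop :=
  R ⊆ closure3 a b c r R ↑A

/-- The probability of the event `E` under the Bernoulli product measure with
density `p` on subsets of the finite vertex set `D`. -/
noncomputable def PP {α : Type*} [DecidableEq α] (D : Finset α) (p : ℝ)
    (E : Finset α → Prop) : ℝ :=
  ∑ A ∈ D.powerset, if E A then p ^ A.card * (1 - p) ^ (D.card - A.card) else 0

/-- Conditional probability `ℙ_p(E | F)`. -/
noncomputable def PPc {α : Type*} [DecidableEq α] (D : Finset α) (p : ℝ)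
    (E F : Finset α → Prop) : ℝ :=
  PP D p (fun A => E A ∧ F A) / PP D p F

/-- The two-dimensional neighbourhood `N_{a,b} ⊂ ℤ²` as a finset:
nonzero multiples of `e₁` up to `a` and of `e₂` up to `b`. -/
noncomputable def NabF (a b : ℕ) : Finset V2 :=
  ((Finset.Icc (-(a : ℤ)) (a : ℤ)).erase 0).image (fun k => ((k, 0) : V2)) ∪
    ((Finset.Icc (-(b : ℤ)) (b : ℤ)).erase 0).image (fun k => ((0, k) : V2))

/-- The update family `N_m^{a,b}`: all `m`-element subsets of `N_{a,b}`. -/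
noncomputable def NabFam (a b m : ℕ) : Finset (Finset V2) := (NabF a b).powersetCard m

/-- `H` is the cross-section of a beam: a (finite, nonempty) connected subset of `ℤ²`
which is closed under `N_{a+b+1}^{a,b}`-bootstrap percolation. -/
def IsBeamH (a b : ℕ) (H : Finset V2) : Prop :=
  H.Nonempty ∧ ConnIn (↑H : Set V2) ∧
    uclosure (NabFam a b (a + b + 1)) (↑H : Set V2) = (↑H : Set V2)

/-- The translate by `t` of the beam `H × [w] ⊂ ℤ³`. -/
def beamSet (H : Finset V2) (w : ℕ) (t : V3) : Set V3 :=
  {v | ((v.1 - t.1, v.2.1 - t.2.1) : V2) ∈ H ∧ 1 ≤ v.2.2 - t.2.2 ∧ v.2.2 - t.2.2 ≤ (w : ℤ)}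

/-- The collection `B_{n₁,n₂}` of all translates contained in `[L]³` of beams `H × [w]`
with `w ≤ n₁` and `|H| ≤ n₂`. -/
def beamColl (a b L n₁ n₂ : ℕ) : Set (Set V3) :=
  {S | ∃ (H : Finset V2) (w : ℕ) (t : V3), IsBeamH a b H ∧ 1 ≤ w ∧ w ≤ n₁ ∧
    H.card ≤ n₂ ∧ S = beamSet H w t ∧ S ⊆ rect L L L}

section BeamCount

/-- The four lattice directions. -/
def dirs : List V2 := [(1,0), (-1,0), (0,1), (0,-1)]

lemma neg_mem_dirs {d : V2} (h : d ∈ dirs) : -d ∈ dirs := by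
  fin_cases h <;> simp [dirs]

/-- Process the directions `ds` at vertex `v`: returns (bits, new queue entries, new visited). -/
noncomputable def procD (S : Finset V2) (v : V2) :
    List V2 → Finset V2 → List Bool × List (V2 × Option V2) × Finset V2
  | [], vis => ([], [], vis)
  | d :: ds, vis =>
    if v + d ∈ S ∧ v + d ∉ vis then
      let r := procD S v ds (insert (v+d) vis)
      (true :: r.1, (v + d, some (-d)) :: r.2.1, r.2.2)
    else
      let r := procD S v ds vis
      (false :: r.1, r.2.1, r.2.2)

lemma procD_len (S : Finset V2) (v : V2) :
    ∀ (ds : List V2) (vis : Finset V2), (procD S v ds vis).1.length = ds.length := by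
  intro ds
  induction ds with
  | nil => intro vis; simp [procD]
  | cons d ds ih =>
    intro vis
    by_cases h : v + d ∈ S ∧ v + d ∉ vis <;> simp [procD, h, ih]

lemma procD_count (S : Finset V2) (v : V2) :
    ∀ (ds : List V2) (vis : Finset V2),
      (procD S v ds vis).1.count true = (procD S v ds vis).2.1.length := by
  intro ds
  induction ds with
  | nil => intro vis; simp [procD]
  | cons d ds ih =>
    intro vis
    by_cases h : v + d ∈ S ∧ v + d ∉ vis <;> simp [procD, h, ih]

lemma procD_subset (S : Finset V2) (v : V2) :
    ∀ (ds : List V2) (vis : Finset V2), vis ⊆ (procD S v ds vis).2.2 := by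
  intro ds
  induction ds with
  | nil => intro vis; simp [procD]
  | cons d ds ih =>
    intro vis
    by_cases h : v + d ∈ S ∧ v + d ∉ vis
    · simp only [procD, if_pos h]
      exact (Finset.subset_insert _ _).trans (ih _)
    · simp only [procD, if_neg h]
      exact ih _

lemma procD_card (S : Finset V2) (v : V2) :
    ∀ (ds : List V2) (vis : Finset V2),
      (procD S v ds vis).2.2.card = vis.card + (procD S v ds vis).2.1.length := by
  intro ds
  induction ds with
  | nil => intro vis; simp [procD]
  | cons d ds ih =>
    intro vis
    by_cases h : v + d ∈ S ∧ v + d ∉ vis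
    · simp only [procD, if_pos h, List.length_cons]
      rw [ih, Finset.card_insert_of_notMem h.2]
      ring
    · simp only [procD, if_neg h]
      exact ih _

/-- every new queue entry comes from some direction, its vertex is in S and in new visited. -/
lemma procD_entries (S : Finset V2) (v : V2) :
    ∀ (ds : List V2) (vis : Finset V2), ∀ e ∈ (procD S v ds vis).2.1,
      ∃ d ∈ ds, e = (v + d, some (-d)) ∧ v + d ∈ S ∧ v + d ∈ (procD S v ds vis).2.2 := by
  intro ds
  induction ds with
  | nil => intro vis e he; simp [procD] at he
  | cons d ds ih =>
    intro vis e he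
    by_cases h : v + d ∈ S ∧ v + d ∉ vis
    · simp only [procD, if_pos h, List.mem_cons] at he
      simp only [procD, if_pos h]
      rcases he with rfl | he
      · exact ⟨d, by simp, rfl, h.1, procD_subset S v ds _ (Finset.mem_insert_self _ _)⟩
      · obtain ⟨d', hd', he', hS', hv'⟩ := ih _ e he
        exact ⟨d', by simp [hd'], he', hS', hv'⟩
    · simp only [procD, if_neg h] at he ⊢
      obtain ⟨d', hd', he', hS', hv'⟩ := ih _ e he
      exact ⟨d', by simp [hd'], he', hS', hv'⟩

/-- new visited points are old ones or vertices of new entries -/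
lemma procD_new (S : Finset V2) (v : V2) :
    ∀ (ds : List V2) (vis : Finset V2), ∀ x ∈ (procD S v ds vis).2.2,
      x ∈ vis ∨ ∃ e ∈ (procD S v ds vis).2.1, e.1 = x := by
  intro ds
  induction ds with
  | nil => intro vis x hx; simp [procD] at hx; exact Or.inl hx
  | cons d ds ih =>
    intro vis x hx
    by_cases h : v + d ∈ S ∧ v + d ∉ vis
    · simp only [procD, if_pos h] at hx ⊢
      rcases ih _ x hx with hx' | ⟨e, he, he'⟩
      · rcases Finset.mem_insert.1 hx' with rfl | hx''
        · exact Or.inr ⟨(v+d, some (-d)), by simp⟩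
        · exact Or.inl hx''
      · exact Or.inr ⟨e, by simp [he], he'⟩
    · simp only [procD, if_neg h] at hx ⊢
      rcases ih _ x hx with hx' | ⟨e, he, he'⟩
      · exact Or.inl hx'
      · exact Or.inr ⟨e, by simp [he], he'⟩

/-- after processing, every tested direction leading into S is visited. -/
lemma procD_closed (S : Finset V2) (v : V2) :
    ∀ (ds : List V2) (vis : Finset V2), ∀ d ∈ ds, v + d ∈ S → v + d ∈ (procD S v ds vis).2.2 := by
  intro ds
  induction ds with
  | nil => intro vis d hd; simp at hd
  | cons d' ds ih =>
    intro vis d hd hdS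
    by_cases h : v + d' ∈ S ∧ v + d' ∉ vis
    · simp only [procD, if_pos h]
      rcases List.mem_cons.1 hd with rfl | hd'
      · exact procD_subset S v ds _ (Finset.mem_insert_self _ _)
      · exact ih _ d hd' hdS
    · simp only [procD, if_neg h]
      rcases List.mem_cons.1 hd with rfl | hd'
      · have : v + d ∈ vis := by tauto
        exact procD_subset S v ds _ this
      · exact ih _ d hd' hdS

/-- determinism: if the bits agree then everything agrees. -/
lemma procD_det (S₁ S₂ : Finset V2) (v : V2) :
    ∀ (ds : List V2) (vis : Finset V2),
      (procD S₁ v ds vis).1 = (procD S₂ v ds vis).1 →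
      (procD S₁ v ds vis).2 = (procD S₂ v ds vis).2 := by
  intro ds
  induction ds with
  | nil => intro vis _; simp [procD]
  | cons d ds ih =>
    intro vis hb
    by_cases h1 : v + d ∈ S₁ ∧ v + d ∉ vis <;> by_cases h2 : v + d ∈ S₂ ∧ v + d ∉ vis
    · simp only [procD, if_pos h1, if_pos h2, List.cons.injEq, true_and] at hb ⊢
      have := ih _ hb
      rw [Prod.ext_iff] at this
      rw [Prod.ext_iff]
      exact ⟨by rw [this.1], this.2⟩
    · simp [procD, if_pos h1, if_neg h2] at hb
    · simp [procD, if_neg h1, if_pos h2] at hb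
    · simp only [procD, if_neg h1, if_neg h2, List.cons.injEq, true_and] at hb ⊢
      exact ih _ hb

/-- The directions to test for a queue entry with ban `ban`. -/
def testDirs (ban : Option V2) : List V2 :=
  match ban with
  | none => dirs
  | some b => dirs.erase b

lemma testDirs_len {ban : Option V2} (h : ∀ b, ban = some b → b ∈ dirs) :
    (testDirs ban).length = 4 - (if ban.isSome then 1 else 0) := by
  match ban with
  | none => simp [testDirs, dirs]
  | some b =>
    have hb : b ∈ dirs := h b rfl
    simp only [testDirs, Option.isSome_some, if_pos]
    rw [List.length_erase_of_mem hb]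
    rfl

lemma testDirs_sub {ban : Option V2} {d : V2} (h : d ∈ testDirs ban) : d ∈ dirs := by
  match ban with
  | none => exact h
  | some b => exact List.mem_of_mem_erase h

/-- The BFS run: fuel, queue of (vertex, banned direction), visited set. Returns bits and final visited. -/
noncomputable def runP (S : Finset V2) : ℕ → List (V2 × Option V2) → Finset V2 → List Bool × Finset V2
  | 0, _, vis => ([], vis)
  | _+1, [], vis => ([], vis)
  | n+1, e :: q, vis =>
    let r := procD S e.1 (testDirs e.2) vis
    let r' := runP S n (q ++ r.2.1) r.2.2
    (r.1 ++ r'.1, r'.2)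

lemma runP_mono (S : Finset V2) :
    ∀ (fuel : ℕ) (q : List (V2 × Option V2)) (vis : Finset V2), vis ⊆ (runP S fuel q vis).2 := by
  intro fuel
  induction fuel with
  | zero => intro q vis; simp [runP]
  | succ n ih =>
    intro q vis
    match q with
    | [] => simp [runP]
    | e :: q =>
      simp only [runP]
      exact (procD_subset S e.1 _ vis).trans (ih _ _)

lemma runP_subS (S : Finset V2) :
    ∀ (fuel : ℕ) (q : List (V2 × Option V2)) (vis : Finset V2), vis ⊆ S → (runP S fuel q vis).2 ⊆ S := by
  intro fuel
  induction fuel with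
  | zero => intro q vis h; simpa [runP] using h
  | succ n ih =>
    intro q vis h
    match q with
    | [] => simpa [runP] using h
    | e :: q =>
      simp only [runP]
      apply ih
      intro x hx
      rcases procD_new S e.1 (testDirs e.2) vis x hx with hx' | ⟨e', he', rfl⟩
      · exact h hx'
      · obtain ⟨d, hd, heq, hS, -⟩ := procD_entries S e.1 _ vis e' he'
        rw [heq]; exact hS

lemma runP_card (S : Finset V2) :
    ∀ (fuel : ℕ) (q : List (V2 × Option V2)) (vis : Finset V2),
      (runP S fuel q vis).2.card = vis.card + (runP S fuel q vis).1.count true := by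
  intro fuel
  induction fuel with
  | zero => intro q vis; simp [runP]
  | succ n ih =>
    intro q vis
    match q with
    | [] => simp [runP]
    | e :: q =>
      simp only [runP, List.count_append]
      rw [ih, procD_card, procD_count]
      ring

/-- weight of a queue entry -/
def wt (e : V2 × Option V2) : ℕ := if e.2.isSome then 3 else 4

lemma runP_len (S : Finset V2) :
    ∀ (fuel : ℕ) (q : List (V2 × Option V2)) (vis : Finset V2),
      vis ⊆ S → q.length + S.card ≤ fuel + vis.card →
      (∀ e ∈ q, ∀ b, e.2 = some b → b ∈ dirs) →
      (runP S fuel q vis).1.length = 3 * (runP S fuel q vis).1.count true + (q.map wt).sum := by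
  intro fuel
  induction fuel with
  | zero =>
    intro q vis h1 h2 h3
    have : q.length = 0 := by
      have := Finset.card_le_card h1
      omega
    rw [List.length_eq_zero_iff] at this
    subst this
    simp [runP]
  | succ n ih =>
    intro q vis h1 h2 h3
    match q with
    | [] => simp [runP]
    | e :: q =>
      simp only [runP, List.length_append, List.count_append, List.map_cons, List.sum_cons]
      have hsub : (procD S e.1 (testDirs e.2) vis).2.2 ⊆ S := by
        intro x hx
        rcases procD_new S e.1 (testDirs e.2) vis x hx with hx' | ⟨e', he', rfl⟩
        · exact h1 hx'
        · obtain ⟨d, hd, heq, hS, -⟩ := procD_entries S e.1 _ vis e' he'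
          rw [heq]; exact hS
      have hcard := procD_card S e.1 (testDirs e.2) vis
      have hrec := ih (q ++ (procD S e.1 (testDirs e.2) vis).2.1) (procD S e.1 (testDirs e.2) vis).2.2
        hsub
        (by
          simp only [List.length_append, List.length_cons] at h2 ⊢
          omega)
        (by
          intro e' he' b hb
          rcases List.mem_append.1 he' with he'' | he''
          · exact h3 e' (List.mem_cons_of_mem _ he'') b hb
          · obtain ⟨d, hd, rfl, -, -⟩ := procD_entries S e.1 _ vis e' he''
            simp only [Option.some.injEq] at hb
            subst hb
            exact neg_mem_dirs (testDirs_sub hd))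
      rw [hrec]
      have hlen : (procD S e.1 (testDirs e.2) vis).1.length = wt e := by
        rw [procD_len, testDirs_len (fun b hb => h3 e (List.mem_cons_self) b hb)]
        unfold wt
        rcases e.2 <;> simp
      have hcnt := procD_count S e.1 (testDirs e.2) vis
      simp only [List.map_append, List.sum_append]
      have hwts : ((procD S e.1 (testDirs e.2) vis).2.1.map wt).sum
          = 3 * (procD S e.1 (testDirs e.2) vis).2.1.length := by
        rw [List.sum_eq_card_nsmul ((procD S e.1 (testDirs e.2) vis).2.1.map wt) 3, List.length_map]
        · ring
        · intro x hx
          obtain ⟨e', he', rfl⟩ := List.mem_map.1 hx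
          obtain ⟨d, hd, rfl, -, -⟩ := procD_entries S e.1 _ vis e' he'
          simp [wt]
      rw [hwts, hlen, hcnt]
      ring

/-- the closure property of the final visited set. -/
lemma runP_closed (S : Finset V2) :
    ∀ (fuel : ℕ) (q : List (V2 × Option V2)) (vis : Finset V2),
      vis ⊆ S → q.length + S.card ≤ fuel + vis.card →
      (∀ e ∈ q, e.1 ∈ vis) →
      (∀ e ∈ q, ∀ b, e.2 = some b → e.1 + b ∈ vis) →
      (∀ x ∈ vis, (∀ e ∈ q, e.1 ≠ x) → ∀ d ∈ dirs, x + d ∈ S → x + d ∈ vis) →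
      ∀ x ∈ (runP S fuel q vis).2, ∀ d ∈ dirs, x + d ∈ S → x + d ∈ (runP S fuel q vis).2 := by
  intro fuel
  induction fuel with
  | zero =>
    intro q vis h1 h2 h3 h4 h5
    have hq : q.length = 0 := by
      have := Finset.card_le_card h1
      omega
    rw [List.length_eq_zero_iff] at hq
    subst hq
    simpa [runP] using fun x hx d hd hdS => h5 x hx (by simp) d hd hdS
  | succ n ih =>
    intro q vis h1 h2 h3 h4 h5
    match q with
    | [] =>
      simpa [runP] using fun x hx d hd hdS => h5 x hx (by simp) d hd hdS
    | e :: q =>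
      simp only [runP]
      set r := procD S e.1 (testDirs e.2) vis with hr
      apply ih (q ++ r.2.1) r.2.2
      · -- vis' ⊆ S
        intro x hx
        rcases procD_new S e.1 (testDirs e.2) vis x hx with hx' | ⟨e', he', rfl⟩
        · exact h1 hx'
        · obtain ⟨d, hd, heq, hS, -⟩ := procD_entries S e.1 _ vis e' he'
          rw [heq]; exact hS
      · -- fuel bound
        have hc := procD_card S e.1 (testDirs e.2) vis
        rw [← hr] at hc
        simp only [List.length_append, List.length_cons] at h2 ⊢
        omega
      · -- queue entries visited
        intro e' he'
        rcases List.mem_append.1 he' with he'' | he''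
        · exact procD_subset S e.1 _ vis (h3 e' (List.mem_cons_of_mem _ he''))
        · obtain ⟨d, hd, heq, hS, hv⟩ := procD_entries S e.1 _ vis e' he''
          rw [heq]; exact hv
      · -- ban points to visited
        intro e' he' b hb
        rcases List.mem_append.1 he' with he'' | he''
        · exact procD_subset S e.1 _ vis (h4 e' (List.mem_cons_of_mem _ he'') b hb)
        · obtain ⟨d, hd, heq, hS, hv⟩ := procD_entries S e.1 _ vis e' he''
          subst heq
          simp only [Option.some.injEq] at hb
          subst hb
          have : e.1 + d + -d = e.1 := by ring
          rw [this]
          exact procD_subset S e.1 _ vis (h3 e (List.mem_cons_self))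
      · -- closedness invariant
        intro x hx hqx d hd hdS
        rcases procD_new S e.1 (testDirs e.2) vis x hx with hx' | ⟨e', he', heq⟩
        · by_cases hxe : x = e.1
          · -- x is the popped vertex
            subst hxe
            by_cases hdt : d ∈ testDirs e.2
            · exact procD_closed S e.1 _ vis d hdt hdS
            · -- d is the banned direction
              match he2 : e.2 with
              | none => exact absurd hd (by rw [he2] at hdt; exact hdt)
              | some b =>
                have hdb : d = b := by
                  by_contra hne
                  exact hdt (by rw [he2]; exact (List.mem_erase_of_ne hne).2 hd)
                subst hdb
                exact procD_subset S e.1 _ vis (h4 e (List.mem_cons_self) d he2)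
          · -- x was visited before and is not in the old queue
            have : ∀ e' ∈ e :: q, e'.1 ≠ x := by
              intro e' he'
              rcases List.mem_cons.1 he' with rfl | he''
              · exact fun hc => hxe hc.symm
              · exact hqx e' (List.mem_append_left _ he'')
            exact procD_subset S e.1 _ vis (h5 x hx' this d hd hdS)
        · -- x is a newly discovered vertex: it is in the new queue, contradiction
          exfalso
          exact hqx e' (List.mem_append_right _ he') heq

/-- determinism of the run. -/
lemma runP_det (S₁ S₂ : Finset V2) :
    ∀ (fuel : ℕ) (q : List (V2 × Option V2)) (vis : Finset V2),
      (runP S₁ fuel q vis).1 = (runP S₂ fuel q vis).1 →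
      (runP S₁ fuel q vis).2 = (runP S₂ fuel q vis).2 := by
  intro fuel
  induction fuel with
  | zero => intro q vis _; simp [runP]
  | succ n ih =>
    intro q vis hb
    match q with
    | [] => simp [runP]
    | e :: q =>
      simp only [runP] at hb ⊢
      have hlen : (procD S₁ e.1 (testDirs e.2) vis).1.length
          = (procD S₂ e.1 (testDirs e.2) vis).1.length := by
        rw [procD_len, procD_len]
      have h1 : (procD S₁ e.1 (testDirs e.2) vis).1 = (procD S₂ e.1 (testDirs e.2) vis).1 :=
        List.append_inj_left hb hlen
      have h2 := procD_det S₁ S₂ e.1 (testDirs e.2) vis h1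
      rw [Prod.ext_iff] at h2
      rw [h2.1, h2.2] at hb ⊢
      rw [h1] at hb
      exact ih _ _ (List.append_cancel_left hb)

/-- The encoding of an animal `S` (connected, containing the origin), with fuel `n`. -/
noncomputable def encodeN (n : ℕ) (S : Finset V2) : List Bool :=
  (runP S n [(((0:ℤ),(0:ℤ)), none)] {((0:ℤ),(0:ℤ))}).1

noncomputable def visN (n : ℕ) (S : Finset V2) : Finset V2 :=
  (runP S n [(((0:ℤ),(0:ℤ)), none)] {((0:ℤ),(0:ℤ))}).2


lemma latAdj_dirs {u v : V2} (h : latAdj u v) : ∃ d ∈ dirs, v = u + d := by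
  refine ⟨(v.1 - u.1, v.2 - u.2), ?_, by ext <;> simp⟩
  unfold latAdj at h
  simp only [dirs, List.mem_cons, List.mem_singleton]
  have h1 := u.1 - v.1
  rcases Int.natAbs_eq (u.1 - v.1) with he | he <;>
    rcases Int.natAbs_eq (u.2 - v.2) with he2 | he2 <;>
  · rw [Prod.ext_iff, Prod.ext_iff, Prod.ext_iff, Prod.ext_iff]
    simp only
    omega

/-- The run on an animal visits exactly the animal. -/
lemma visN_eq (n : ℕ) (S : Finset V2) (h0 : ((0:ℤ),(0:ℤ)) ∈ S) (hconn : ConnIn ↑S)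
    (hcard : S.card ≤ n) : visN n S = S := by
  apply Finset.Subset.antisymm
  · exact runP_subS S n _ _ (by simpa using h0)
  · have hcl := runP_closed S n [(((0:ℤ),(0:ℤ)), none)] {((0:ℤ),(0:ℤ))}
      (by simpa using h0)
      (by simp only [List.length_cons, List.length_nil, Finset.card_singleton]; omega)
      (by simp)
      (by simp)
      (by simp)
    have h0v : ((0:ℤ),(0:ℤ)) ∈ visN n S :=
      runP_mono S n _ _ (Finset.mem_singleton_self _)
    intro x hx
    have := hconn ((0:ℤ),(0:ℤ)) (by simpa using h0) x (by simpa using hx)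
    clear hx
    induction this with
    | refl => exact h0v
    | tail hs hstep ih2 =>
      obtain ⟨hu, hv, hadj⟩ := hstep
      obtain ⟨d, hd, rfl⟩ := latAdj_dirs hadj
      exact hcl _ ih2 d hd (by simpa using hv)

lemma encodeN_card (n : ℕ) (S : Finset V2) (h0 : ((0:ℤ),(0:ℤ)) ∈ S) (hconn : ConnIn ↑S)
    (hcard : S.card ≤ n) : (encodeN n S).count true + 1 = S.card := by
  have := runP_card S n [(((0:ℤ),(0:ℤ)), none)] {((0:ℤ),(0:ℤ))}
  have h2 : visN n S = S := visN_eq n S h0 hconn hcard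
  unfold visN at h2
  rw [h2] at this
  simp only [Finset.card_singleton] at this
  unfold encodeN
  omega

lemma encodeN_len (n : ℕ) (S : Finset V2) (h0 : ((0:ℤ),(0:ℤ)) ∈ S)
    (hcard : S.card ≤ n) : (encodeN n S).length = 3 * (encodeN n S).count true + 4 := by
  have := runP_len S n [(((0:ℤ),(0:ℤ)), none)] {((0:ℤ),(0:ℤ))}
    (by simpa using h0) (by simp only [List.length_cons, List.length_nil, Finset.card_singleton]; omega) (by simp)
  simpa [wt, encodeN] using this

lemma encodeN_inj (n : ℕ) {S₁ S₂ : Finset V2}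
    (h01 : ((0:ℤ),(0:ℤ)) ∈ S₁) (hconn1 : ConnIn ↑S₁) (hcard1 : S₁.card ≤ n)
    (h02 : ((0:ℤ),(0:ℤ)) ∈ S₂) (hconn2 : ConnIn ↑S₂) (hcard2 : S₂.card ≤ n)
    (h : encodeN n S₁ = encodeN n S₂) : S₁ = S₂ := by
  have := runP_det S₁ S₂ n [(((0:ℤ),(0:ℤ)), none)] {((0:ℤ),(0:ℤ))} h
  rw [← visN_eq n S₁ h01 hconn1 hcard1, ← visN_eq n S₂ h02 hconn2 hcard2]
  exact this

/-- all boolean lists of length `m`. -/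
def allLists : ℕ → Finset (List Bool)
  | 0 => {[]}
  | m+1 => (allLists m).biUnion (fun l => {true :: l, false :: l})

lemma mem_allLists (l : List Bool) : l ∈ allLists l.length := by
  induction l with
  | nil => simp [allLists]
  | cons b l ih =>
    simp only [List.length_cons, allLists, Finset.mem_biUnion]
    exact ⟨l, ih, by cases b <;> simp⟩

lemma length_of_mem_allLists {l : List Bool} {m : ℕ} (h : l ∈ allLists m) : l.length = m := by
  induction m generalizing l with
  | zero => simp [allLists] at h; simp [h]
  | succ m ih =>
    simp only [allLists, Finset.mem_biUnion, Finset.mem_insert, Finset.mem_singleton] at h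
    obtain ⟨l', hl', h⟩ := h
    rcases h with rfl | rfl <;> simp [ih hl']

/-- number of true indices equals count of true. -/
lemma card_trueIdx (l : List Bool) :
    ((Finset.range l.length).filter (fun i => l.getD i false = true)).card = l.count true := by
  induction l with
  | nil => simp
  | cons b t ih =>
    rw [Finset.card_filter, List.length_cons, Finset.sum_range_succ']
    simp only [List.getD_cons_succ, List.getD_cons_zero]
    rw [← Finset.card_filter, ih, List.count_cons]
    cases b <;> simp [add_comm]

/-- the `j`-th slice: bit strings of length `3j+4` with `j` ones. -/
def sliceC (j : ℕ) : Finset (List Bool) :=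
  (allLists (3*j+4)).filter (fun l => l.count true = j)

lemma sliceC_card (j : ℕ) : (sliceC j).card ≤ Nat.choose (3*j+4) j := by
  have h := Finset.card_le_card_of_injOn
    (f := fun l => (Finset.range (3*j+4)).filter (fun i => l.getD i false = true))
    (s := sliceC j) (t := (Finset.range (3*j+4)).powersetCard j) ?_ ?_
  · rw [Finset.card_powersetCard, Finset.card_range] at h
    exact h
  · intro l hl
    simp only [sliceC, Finset.mem_coe, Finset.mem_filter] at hl
    have hlen : l.length = 3*j+4 := length_of_mem_allLists hl.1
    simp only [Finset.mem_coe, Finset.mem_powersetCard]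
    constructor
    · exact Finset.filter_subset _ _
    · rw [← hlen, card_trueIdx, hl.2]
  · intro l₁ h₁ l₂ h₂ hf
    simp only [Finset.mem_coe, sliceC, Finset.mem_filter] at h₁ h₂
    have hl₁ : l₁.length = 3*j+4 := length_of_mem_allLists h₁.1
    have hl₂ : l₂.length = 3*j+4 := length_of_mem_allLists h₂.1
    have hf' : (Finset.range (3*j+4)).filter (fun i => l₁.getD i false = true)
        = (Finset.range (3*j+4)).filter (fun i => l₂.getD i false = true) := hf
    apply List.ext_getElem (by rw [hl₁, hl₂])
    intro i hi₁ hi₂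
    have hthis : (i ∈ (Finset.range (3*j+4)).filter (fun i => l₁.getD i false = true)) ↔
        (i ∈ (Finset.range (3*j+4)).filter (fun i => l₂.getD i false = true)) := by rw [hf']
    simp only [Finset.mem_filter, Finset.mem_range] at hthis
    have hir : i < 3*j+4 := by omega
    rw [List.getD_eq_getElem l₁ false hi₁, List.getD_eq_getElem l₂ false hi₂] at hthis
    rcases Bool.eq_false_or_eq_true l₁[i] with hb | hb
    · rw [hb, (hthis.1 ⟨hir, hb⟩).2]
    · rcases Bool.eq_false_or_eq_true l₂[i] with hb2 | hb2
      · exact absurd (hthis.2 ⟨hir, hb2⟩) (by simp [hb])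
      · rw [hb, hb2]

/-- key binomial bound. -/
lemma choose_bound : ∀ j : ℕ, Nat.choose (3*j+4) j ≤ 7 * 8 ^ j := by
  intro j
  induction j with
  | zero => simp
  | succ j ih =>
    -- chain of identities
    have e1 : Nat.choose (3*j+5) j * (2*j+5) = Nat.choose (3*j+4) j * (3*j+5) := by
      have h1 := Nat.add_one_mul_choose_eq (3*j+4) j
      have h2 := Nat.choose_succ_right_eq (3*j+5) j
      have h3 : (3*j+5) - j = 2*j+5 := by omega
      rw [h3] at h2
      have h4 : 3*j+4+1 = 3*j+5 := by ring
      rw [h4] at h1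
      rw [← h2, ← h1]; ring
    have e2 : Nat.choose (3*j+6) j * (2*j+6) = Nat.choose (3*j+5) j * (3*j+6) := by
      have h1 := Nat.add_one_mul_choose_eq (3*j+5) j
      have h2 := Nat.choose_succ_right_eq (3*j+6) j
      have h3 : (3*j+6) - j = 2*j+6 := by omega
      rw [h3] at h2
      have h4 : 3*j+5+1 = 3*j+6 := by ring
      rw [h4] at h1
      rw [← h2, ← h1]; ring
    have e3 : Nat.choose (3*j+7) (j+1) * (j+1) = Nat.choose (3*j+6) j * (3*j+7) := by
      have h1 := Nat.add_one_mul_choose_eq (3*j+6) j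
      have h4 : 3*j+6+1 = 3*j+7 := by ring
      rw [h4] at h1
      rw [← h1]; ring
    -- combine
    have key : Nat.choose (3*j+7) (j+1) * ((j+1) * ((2*j+5) * (2*j+6)))
        = Nat.choose (3*j+4) j * ((3*j+5) * ((3*j+6) * (3*j+7))) := by
      calc Nat.choose (3*j+7) (j+1) * ((j+1) * ((2*j+5) * (2*j+6)))
          = (Nat.choose (3*j+7) (j+1) * (j+1)) * ((2*j+5) * (2*j+6)) := by ring
        _ = (Nat.choose (3*j+6) j * (3*j+7)) * ((2*j+5) * (2*j+6)) := by rw [e3]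
        _ = (Nat.choose (3*j+6) j * (2*j+6)) * ((3*j+7) * (2*j+5)) := by ring
        _ = (Nat.choose (3*j+5) j * (3*j+6)) * ((3*j+7) * (2*j+5)) := by rw [e2]
        _ = (Nat.choose (3*j+5) j * (2*j+5)) * ((3*j+6) * (3*j+7)) := by ring
        _ = (Nat.choose (3*j+4) j * (3*j+5)) * ((3*j+6) * (3*j+7)) := by rw [e1]
        _ = Nat.choose (3*j+4) j * ((3*j+5) * ((3*j+6) * (3*j+7))) := by ring
    have hpoly : (3*j+5) * ((3*j+6) * (3*j+7)) ≤ 8 * ((j+1) * ((2*j+5) * (2*j+6))) := by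
      have hexp : (3*j+5) * ((3*j+6) * (3*j+7)) = 27*j^3+162*j^2+321*j+210 := by ring
      have hexp2 : 8 * ((j+1) * ((2*j+5) * (2*j+6))) = 32*j^3+208*j^2+416*j+240 := by ring
      rw [hexp, hexp2]
      nlinarith [Nat.zero_le (j^3), Nat.zero_le (j^2), Nat.zero_le j]
    have h8 : Nat.choose (3*j+7) (j+1) * ((j+1) * ((2*j+5) * (2*j+6)))
        ≤ (7 * 8^(j+1)) * ((j+1) * ((2*j+5) * (2*j+6))) := by
      rw [key]
      calc Nat.choose (3*j+4) j * ((3*j+5) * ((3*j+6) * (3*j+7)))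
          ≤ (7 * 8^j) * (8 * ((j+1) * ((2*j+5) * (2*j+6)))) :=
            Nat.mul_le_mul ih hpoly
        _ = (7 * 8^(j+1)) * ((j+1) * ((2*j+5) * (2*j+6))) := by ring
    have hpos : 0 < (j+1) * ((2*j+5) * (2*j+6)) := by positivity
    have h9 : ((j+1) * ((2*j+5) * (2*j+6))) * Nat.choose (3*j+7) (j+1)
        ≤ ((j+1) * ((2*j+5) * (2*j+6))) * (7 * 8^(j+1)) := by linarith [h8]
    have := Nat.le_of_mul_le_mul_left h9 hpos
    have heq : 3*(j+1)+4 = 3*j+7 := by omega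
    rw [heq]
    exact this

/-- the full codomain of bit strings. -/
def bitF (n : ℕ) : Finset (List Bool) := (Finset.range n).biUnion sliceC

lemma geom_bound : ∀ n : ℕ, (∑ j ∈ Finset.range n, 7 * 8 ^ j) ≤ 8 ^ n := by
  intro n
  induction n with
  | zero => simp
  | succ n ih =>
    rw [Finset.sum_range_succ, pow_succ]
    omega

lemma bitF_card (n : ℕ) : (bitF n).card ≤ 8 ^ n := by
  calc (bitF n).card ≤ ∑ j ∈ Finset.range n, (sliceC j).card := Finset.card_biUnion_le
    _ ≤ ∑ j ∈ Finset.range n, 7 * 8 ^ j := Finset.sum_le_sum (fun j _ => (sliceC_card j).trans (choose_bound j))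
    _ ≤ 8 ^ n := geom_bound n

-- new material
lemma mem_image_sub (H : Finset V2) (q x : V2) :
    x ∈ H.image (fun y => y - q) ↔ x + q ∈ H := by
  simp only [Finset.mem_image]
  constructor
  · rintro ⟨u, hu, rfl⟩
    simpa using hu
  · intro h
    exact ⟨x + q, h, by ring⟩

lemma card_image_sub (H : Finset V2) (q : V2) : (H.image (fun y => y - q)).card = H.card :=
  Finset.card_image_of_injective _ (sub_left_injective)

lemma connIn_image (H : Finset V2) (q : V2) (h : ConnIn (↑H : Set V2)) :
    ConnIn (↑(H.image (fun y => y - q)) : Set V2) := by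
  intro x hx y hy
  rw [Finset.coe_image] at hx hy
  obtain ⟨u, hu, rfl⟩ := hx
  obtain ⟨v, hv, rfl⟩ := hy
  refine Relation.ReflTransGen.lift (fun z => z - q) ?_ _ _ (h u hu v hv)
  rintro c d ⟨hc, hd, hadj⟩
  refine ⟨?_, ?_, ?_⟩
  · rw [Finset.coe_image]; exact ⟨c, hc, rfl⟩
  · rw [Finset.coe_image]; exact ⟨d, hd, rfl⟩
  · unfold latAdj at hadj ⊢
    simp only [Prod.fst_sub, Prod.snd_sub]
    have : c.1 - q.1 - (d.1 - q.1) = c.1 - d.1 := by ring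
    rw [this]
    have : c.2 - q.2 - (d.2 - q.2) = c.2 - d.2 := by ring
    rw [this]
    exact hadj

lemma beamSet_translate (H : Finset V2) (w : ℕ) (t : V3) (q : V2) :
    beamSet H w t = beamSet (H.image (fun y => y - q)) w (t.1 + q.1, t.2.1 + q.2, t.2.2) := by
  ext v
  simp only [beamSet, Set.mem_setOf_eq, mem_image_sub]
  constructor
  · rintro ⟨h1, h2, h3⟩
    refine ⟨?_, by simpa using h2, by simpa using h3⟩
    have : ((v.1 - (t.1 + q.1), v.2.1 - (t.2.1 + q.2)) : V2) + q = (v.1 - t.1, v.2.1 - t.2.1) := by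
      ext <;> simp <;> ring
    rw [this]
    exact h1
  · rintro ⟨h1, h2, h3⟩
    have heq : ((v.1 - (t.1 + q.1), v.2.1 - (t.2.1 + q.2)) : V2) + q = (v.1 - t.1, v.2.1 - t.2.1) := by
      ext <;> simp <;> ring
    rw [heq] at h1
    exact ⟨h1, by simpa using h2, by simpa using h3⟩

/-- The encoding map on beam sets. -/
noncomputable def phi (a b L n₁ n₂ : ℕ) (S : Set V3) : V3 × ℕ × List Bool :=
  if h : ∃ (H : Finset V2) (w : ℕ) (t : V3), IsBeamH a b H ∧ 1 ≤ w ∧ w ≤ n₁ ∧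
      H.card ≤ n₂ ∧ S = beamSet H w t ∧ S ⊆ rect L L L then
    let H := h.choose
    let w := h.choose_spec.choose
    let t := h.choose_spec.choose_spec.choose
    let q := (h.choose_spec.choose_spec.choose_spec.1.1).choose
    ((t.1 + q.1, t.2.1 + q.2, t.2.2 + 1), w, encodeN n₂ (H.image (fun x => x - q)))
  else ((0,0,0), 0, [])

lemma phi_spec {a b L n₁ n₂ : ℕ} {S : Set V3} (h : S ∈ beamColl a b L n₁ n₂) :
    ∃ (H : Finset V2) (w : ℕ) (t : V3) (q : V2), q ∈ H ∧ IsBeamH a b H ∧ 1 ≤ w ∧ w ≤ n₁ ∧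
      H.card ≤ n₂ ∧ S = beamSet H w t ∧ S ⊆ rect L L L ∧
      phi a b L n₁ n₂ S = ((t.1 + q.1, t.2.1 + q.2, t.2.2 + 1), w,
        encodeN n₂ (H.image (fun x => x - q))) := by
  have h' : ∃ (H : Finset V2) (w : ℕ) (t : V3), IsBeamH a b H ∧ 1 ≤ w ∧ w ≤ n₁ ∧
      H.card ≤ n₂ ∧ S = beamSet H w t ∧ S ⊆ rect L L L := h
  refine ⟨h'.choose, h'.choose_spec.choose, h'.choose_spec.choose_spec.choose,
    (h'.choose_spec.choose_spec.choose_spec.1.1).choose,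
    (h'.choose_spec.choose_spec.choose_spec.1.1).choose_spec,
    h'.choose_spec.choose_spec.choose_spec.1,
    h'.choose_spec.choose_spec.choose_spec.2.1,
    h'.choose_spec.choose_spec.choose_spec.2.2.1,
    h'.choose_spec.choose_spec.choose_spec.2.2.2.1,
    h'.choose_spec.choose_spec.choose_spec.2.2.2.2.1,
    h'.choose_spec.choose_spec.choose_spec.2.2.2.2.2, ?_⟩
  simp only [phi, dif_pos h']


section Main
variable (a b L n₁ n₂ : ℕ)

/-- the target finite set. -/
noncomputable def targF : Finset (V3 × ℕ × List Bool) :=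
  rectF L L L ×ˢ (Finset.Icc 1 n₁ ×ˢ bitF n₂)

lemma phi_mem {S : Set V3} (h : S ∈ beamColl a b L n₁ n₂) :
    phi a b L n₁ n₂ S ∈ targF L n₁ n₂ := by
  obtain ⟨H, w, t, q, hq, hbeam, hw1, hw2, hcard, hSeq, hsub, hphi⟩ := phi_spec h
  rw [hphi]
  simp only [targF, Finset.mem_product]
  refine ⟨?_, ?_, ?_⟩
  · -- the base point is in the rectangle
    have hmem : ((t.1 + q.1, t.2.1 + q.2, t.2.2 + 1) : V3) ∈ S := by
      rw [hSeq]
      refine ⟨?_, ?_, ?_⟩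
      · simp only
        have : ((t.1 + q.1 - t.1, t.2.1 + q.2 - t.2.1) : V2) = q := by ext <;> simp
        rw [this]
        exact hq
      · simp
      · simp only
        have : t.2.2 + 1 - t.2.2 = 1 := by ring
        rw [this]
        exact_mod_cast hw1
    have := hsub hmem
    rwa [rect, Finset.mem_coe] at this
  · simp only [Finset.mem_Icc]
    exact ⟨hw1, hw2⟩
  · -- the code is a valid bit string
    set K := H.image (fun x => x - q) with hK
    have h0 : ((0:ℤ),(0:ℤ)) ∈ K := by
      rw [hK, mem_image_sub, show ((0:ℤ),(0:ℤ)) + q = q by ext <;> simp]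
      exact hq
    have hcK : K.card ≤ n₂ := by rw [hK, card_image_sub]; exact hcard
    have hconnK : ConnIn (↑K : Set V2) := connIn_image H q hbeam.2.1
    have hcnt := encodeN_card n₂ K h0 hconnK hcK
    have hlen := encodeN_len n₂ K h0 hcK
    simp only [bitF, Finset.mem_biUnion, Finset.mem_range]
    refine ⟨(encodeN n₂ K).count true, ?_, ?_⟩
    · omega
    · simp only [sliceC, Finset.mem_filter]
      refine ⟨?_, by trivial⟩
      have := mem_allLists (encodeN n₂ K)
      rwa [hlen] at this

lemma phi_injOn : Set.InjOn (phi a b L n₁ n₂) (beamColl a b L n₁ n₂) := by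
  intro S₁ h₁ S₂ h₂ heq
  obtain ⟨H₁, w₁, t₁, q₁, hq₁, hbeam₁, hw1₁, hw2₁, hcard₁, hSeq₁, hsub₁, hphi₁⟩ := phi_spec h₁
  obtain ⟨H₂, w₂, t₂, q₂, hq₂, hbeam₂, hw1₂, hw2₂, hcard₂, hSeq₂, hsub₂, hphi₂⟩ := phi_spec h₂
  rw [hphi₁, hphi₂] at heq
  simp only [Prod.ext_iff] at heq
  obtain ⟨⟨e1, e2, e3⟩, e4, e5⟩ := heq
  set K₁ := H₁.image (fun x => x - q₁) with hK₁
  set K₂ := H₂.image (fun x => x - q₂) with hK₂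
  have h0₁ : ((0:ℤ),(0:ℤ)) ∈ K₁ := by rw [hK₁, mem_image_sub, show ((0:ℤ),(0:ℤ)) + q₁ = q₁ by ext <;> simp]; exact hq₁
  have h0₂ : ((0:ℤ),(0:ℤ)) ∈ K₂ := by rw [hK₂, mem_image_sub, show ((0:ℤ),(0:ℤ)) + q₂ = q₂ by ext <;> simp]; exact hq₂
  have hcK₁ : K₁.card ≤ n₂ := by rw [hK₁, card_image_sub]; exact hcard₁
  have hcK₂ : K₂.card ≤ n₂ := by rw [hK₂, card_image_sub]; exact hcard₂
  have hKeq : K₁ = K₂ := encodeN_inj n₂ h0₁ (connIn_image H₁ q₁ hbeam₁.2.1) hcK₁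
    h0₂ (connIn_image H₂ q₂ hbeam₂.2.1) hcK₂ e5
  have e3' : t₁.2.2 = t₂.2.2 := by omega
  rw [hSeq₁, hSeq₂, beamSet_translate H₁ w₁ t₁ q₁, beamSet_translate H₂ w₂ t₂ q₂]
  rw [← hK₁, ← hK₂, hKeq, e1, e2, e3', e4]

lemma targF_card : (targF L n₁ n₂).card = L^3 * (n₁ * (bitF n₂).card) := by
  simp only [targF, rectF, Finset.card_product, Int.card_Icc, Nat.card_Icc]
  have : ((L:ℤ) + 1 - 1).toNat = L := by omega
  rw [this]
  first
  | rw [show 1 + n₁ - 1 = n₁ from by omega]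
  | rw [show n₁ + 1 - 1 = n₁ from by omega]
  ring

end Main



end BeamCount

/-- **Lemma 5.3 (Counting beams).** `|B_{n₁,n₂}| ≤ n₁ L³ (3e)^{n₂}`. -/
theorem statement16 (a b : ℕ) (ha : 1 ≤ a) (hab : a ≤ b) (L n₁ n₂ : ℕ) :
    (beamColl a b L n₁ n₂).Finite ∧
      ((beamColl a b L n₁ n₂).ncard : ℝ) ≤
        (n₁ : ℝ) * (L : ℝ) ^ 3 * (3 * Real.exp 1) ^ n₂ := by
  have hinj := phi_injOn a b L n₁ n₂
  have himg : phi a b L n₁ n₂ '' beamColl a b L n₁ n₂ ⊆ ↑(targF L n₁ n₂) := by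
    rintro _ ⟨S, hS, rfl⟩
    exact phi_mem a b L n₁ n₂ hS
  have hfin : (beamColl a b L n₁ n₂).Finite :=
    Set.Finite.of_finite_image ((targF L n₁ n₂).finite_toSet.subset himg) hinj
  refine ⟨hfin, ?_⟩
  have hn : (beamColl a b L n₁ n₂).ncard ≤ (targF L n₁ n₂).card := by
    rw [← Set.ncard_image_of_injOn hinj, ← Set.ncard_coe_finset]
    exact Set.ncard_le_ncard himg (targF L n₁ n₂).finite_toSet
  have h1 : ((beamColl a b L n₁ n₂).ncard : ℝ) ≤ ((targF L n₁ n₂).card : ℝ) := by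
    exact_mod_cast hn
  refine h1.trans ?_
  rw [targF_card]
  have h8 : ((bitF n₂).card : ℝ) ≤ 8 ^ n₂ := by exact_mod_cast bitF_card n₂
  have he : (8:ℝ) ≤ 3 * Real.exp 1 := by nlinarith [Real.exp_one_gt_d9]
  have hp : (8:ℝ)^n₂ ≤ (3*Real.exp 1)^n₂ := pow_le_pow_left₀ (by norm_num) he n₂
  push_cast
  calc (L:ℝ)^3 * ((n₁:ℝ) * ((bitF n₂).card : ℝ))
      ≤ (L:ℝ)^3 * ((n₁:ℝ) * (8:ℝ)^n₂) := by gcongr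
    _ ≤ (L:ℝ)^3 * ((n₁:ℝ) * (3*Real.exp 1)^n₂) := by gcongr
    _ = (n₁:ℝ) * (L:ℝ)^3 * (3*Real.exp 1)^n₂ := by ring
end
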